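/- arXiv:2310.09230 — 7 statements merged into one kernel-verified Lean document; each statement's English description precedes it below -/
import Mathlib

section
/- A reverse plane partition of shape λ is an irreducible element of the additive monoid RPP^λ (i.e., it is nonzero and cannot be written as the sum of two nonzero reverse plane partitions) if and only if it is a Young indicator. -/
open scoped Classical

/-- A Young diagram: a finite subset of ℕ² closed under decreasing either coordinate. -/
def IsYoung (lam : Finset (ℕ × ℕ)) : Prop :=
  ∀ i j : ℕ, ((i + 1, j) ∈ lam → (i, j) ∈ lam) ∧ ((i, j + 1) ∈ lam → (i, j) ∈ lam)

/-- A reverse plane partition of shape `lam`: a function vanishing off `lam` and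
monotone on `lam` for the componentwise order. -/
def IsRPP (lam : Finset (ℕ × ℕ)) (n : ℕ × ℕ → ℕ) : Prop :=
  (∀ b, b ∉ lam → n b = 0) ∧
  ∀ b ∈ lam, ∀ b' ∈ lam, b ≤ b' → n b ≤ n b'

/-- An upper set of the Young diagram `lam`. -/
def IsUpper (lam U : Finset (ℕ × ℕ)) : Prop :=
  U ⊆ lam ∧ ∀ b ∈ U, ∀ b' ∈ lam, b ≤ b' → b' ∈ U

/-- Edge-adjacency of boxes: they differ by 1 in exactly one coordinate. -/
def Adj (a b : ℕ × ℕ) : Prop :=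
  (a.1 = b.1 ∧ (a.2 = b.2 + 1 ∨ b.2 = a.2 + 1)) ∨
  (a.2 = b.2 ∧ (a.1 = b.1 + 1 ∨ b.1 = a.1 + 1))

/-- A subset `V` is connected: any two boxes are joined by a path of boxes of `V`
whose consecutive boxes are edge-adjacent. -/
def ConnectedIn (V : Finset (ℕ × ℕ)) : Prop :=
  ∀ a ∈ V, ∀ b ∈ V,
    Relation.ReflTransGen (fun x y => x ∈ V ∧ y ∈ V ∧ Adj x y) a b

/-- Characteristic function of a finite set of boxes. -/
def boxIndicator (U : Finset (ℕ × ℕ)) : ℕ × ℕ → ℕ :=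
  fun b => if b ∈ U then 1 else 0

/-- A Young indicator: characteristic function of a nonempty connected upper set. -/
def IsYoungIndicator (lam : Finset (ℕ × ℕ)) (ν : ℕ × ℕ → ℕ) : Prop :=
  ∃ U : Finset (ℕ × ℕ), IsUpper lam U ∧ U.Nonempty ∧ ConnectedIn U ∧
    ν = boxIndicator U

/-- The derivative Δn(i,j) = n(i,j) − n(i−1,j) − n(i,j−1) + n(i−1,j−1),
with `n` extended by zero outside ℕ². -/
def delta (n : ℕ × ℕ → ℕ) : ℕ × ℕ → ℤ := fun b =>
  (n b : ℤ)
  - (if b.1 = 0 then 0 else (n (b.1 - 1, b.2) : ℤ))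
  - (if b.2 = 0 then 0 else (n (b.1, b.2 - 1) : ℤ))
  + (if b.1 = 0 ∨ b.2 = 0 then 0 else (n (b.1 - 1, b.2 - 1) : ℤ))

/-- The weight ω(n) = Σ_{b∈λ} Δn(b). -/
def weight (lam : Finset (ℕ × ℕ)) (n : ℕ × ℕ → ℕ) : ℤ :=
  ∑ b ∈ lam, delta n b

/-- A factorisation of `n` into Young indicators, recorded as a finitely supported
function assigning multiplicities to (the upper sets underlying) Young indicators. -/
def IsFactorisation (lam : Finset (ℕ × ℕ)) (n : ℕ × ℕ → ℕ)
    (T : Finset (ℕ × ℕ) →₀ ℕ) : Prop :=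
  (∀ U ∈ T.support, IsUpper lam U ∧ U.Nonempty ∧ ConnectedIn U) ∧
  ∀ b, n b = ∑ U ∈ T.support, T U * boxIndicator U b


section Helpers

lemma adj_symm {a b : ℕ × ℕ} (h : Adj a b) : Adj b a := by
  unfold Adj at *; omega

lemma adj_comparable {a b : ℕ × ℕ} (h : Adj a b) : a ≤ b ∨ b ≤ a := by
  unfold Adj at h
  simp only [Prod.le_def]
  omega

lemma young_down {lam : Finset (ℕ × ℕ)} (hlam : IsYoung lam) :
    ∀ k l i j : ℕ, (i + k, j + l) ∈ lam → (i, j) ∈ lam := by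
  intro k
  induction k with
  | zero =>
    intro l
    induction l with
    | zero => intro i j h; simpa using h
    | succ l ih =>
      intro i j h
      exact ih i j ((hlam i (j + l)).2 h)
  | succ k ih =>
    intro l i j h
    exact ih l i j ((hlam (i + k) (j + l)).1 h)

lemma young_le {lam : Finset (ℕ × ℕ)} (hlam : IsYoung lam) {a b : ℕ × ℕ}
    (hab : a ≤ b) (hb : b ∈ lam) : a ∈ lam := by
  obtain ⟨k, hk⟩ := Nat.le.dest hab.1
  obtain ⟨l, hl⟩ := Nat.le.dest hab.2
  exact young_down hlam k l a.1 a.2 (by rw [hk, hl]; exact hb)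

lemma path_horiz {S : Finset (ℕ × ℕ)} (i j : ℕ) :
    ∀ k : ℕ, (∀ t ≤ k, (i + t, j) ∈ S) →
      Relation.ReflTransGen (fun x y => x ∈ S ∧ y ∈ S ∧ Adj x y) (i, j) (i + k, j) := by
  intro k
  induction k with
  | zero => intro _; exact Relation.ReflTransGen.refl
  | succ k ih =>
    intro h
    refine Relation.ReflTransGen.tail (ih fun t ht => h t (by omega)) ?_
    exact ⟨h k (by omega), h (k + 1) le_rfl, Or.inr ⟨rfl, Or.inr rfl⟩⟩

lemma path_vert {S : Finset (ℕ × ℕ)} (i j : ℕ) :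
    ∀ l : ℕ, (∀ t ≤ l, (i, j + t) ∈ S) →
      Relation.ReflTransGen (fun x y => x ∈ S ∧ y ∈ S ∧ Adj x y) (i, j) (i, j + l) := by
  intro l
  induction l with
  | zero => intro _; exact Relation.ReflTransGen.refl
  | succ l ih =>
    intro h
    refine Relation.ReflTransGen.tail (ih fun t ht => h t (by omega)) ?_
    exact ⟨h l (by omega), h (l + 1) le_rfl, Or.inl ⟨rfl, Or.inr rfl⟩⟩

lemma path_of_le {S : Finset (ℕ × ℕ)} {a b : ℕ × ℕ} (hab : a ≤ b)
    (hS : ∀ x : ℕ × ℕ, a ≤ x → x ≤ b → x ∈ S) :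
    Relation.ReflTransGen (fun x y => x ∈ S ∧ y ∈ S ∧ Adj x y) a b := by
  obtain ⟨k, hk⟩ := Nat.le.dest hab.1
  obtain ⟨l, hl⟩ := Nat.le.dest hab.2
  have h1 : Relation.ReflTransGen (fun x y => x ∈ S ∧ y ∈ S ∧ Adj x y)
      (a.1, a.2) (a.1 + k, a.2) := by
    refine path_horiz a.1 a.2 k fun t ht => hS (a.1 + t, a.2) ?_ ?_
    · exact ⟨by omega, le_rfl⟩
    · exact ⟨by omega, hab.2⟩
  have h2 : Relation.ReflTransGen (fun x y => x ∈ S ∧ y ∈ S ∧ Adj x y)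
      (a.1 + k, a.2) (a.1 + k, a.2 + l) := by
    refine path_vert (a.1 + k) a.2 l fun t ht => hS (a.1 + k, a.2 + t) ?_ ?_
    · exact ⟨by omega, by omega⟩
    · exact ⟨by omega, by omega⟩
  have := h1.trans h2
  rw [hk, hl] at this
  simpa using this

lemma exists_boundary {α : Type*} {r : α → α → Prop} {P : α → Prop} {a c : α}
    (h : Relation.ReflTransGen r a c) (ha : P a) (hc : ¬ P c) :
    ∃ x y, r x y ∧ P x ∧ ¬ P y := by
  induction h with
  | refl => exact absurd ha hc
  | @tail b c h1 h2 ih =>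
    by_cases hb : P b
    · exact ⟨b, c, h2, hb, hc⟩
    · exact ih hb

end Helpers

/-- A reverse plane partition is irreducible in the monoid RPP^λ iff it is a
Young indicator. -/
theorem stmt1 (lam : Finset (ℕ × ℕ)) (hlam : IsYoung lam)
    (n : ℕ × ℕ → ℕ) (hn : IsRPP lam n) :
    (n ≠ 0 ∧ ∀ y z : ℕ × ℕ → ℕ, IsRPP lam y → IsRPP lam z → n = y + z →
      y = 0 ∨ z = 0) ↔ IsYoungIndicator lam n := by
  constructor
  · rintro ⟨hne, hirr⟩
    -- the support of n
    set S : Finset (ℕ × ℕ) := lam.filter (fun b => n b ≠ 0) with hSdef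
    have hSmem : ∀ b, b ∈ S ↔ b ∈ lam ∧ n b ≠ 0 := by
      intro b; simp [hSdef]
    -- pick a base point
    obtain ⟨b0, hb0⟩ : ∃ b, n b ≠ 0 := by
      by_contra h
      push_neg at h
      exact hne (funext fun b => h b)
    have hb0lam : b0 ∈ lam := by
      by_contra h
      exact hb0 (hn.1 b0 h)
    have hb0S : b0 ∈ S := (hSmem b0).2 ⟨hb0lam, hb0⟩
    set r : ℕ × ℕ → ℕ × ℕ → Prop := fun x y => x ∈ S ∧ y ∈ S ∧ Adj x y with hrdef
    set C : Finset (ℕ × ℕ) := S.filter (fun b => Relation.ReflTransGen r b0 b) with hCdef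
    have hCmem : ∀ b, b ∈ C ↔ b ∈ S ∧ Relation.ReflTransGen r b0 b := by
      intro b; simp [hCdef]
    have hb0C : b0 ∈ C := (hCmem b0).2 ⟨hb0S, Relation.ReflTransGen.refl⟩
    have hCS : C ⊆ S := fun b hb => ((hCmem b).1 hb).1
    have hSlam : S ⊆ lam := fun b hb => ((hSmem b).1 hb).1
    have hClam : C ⊆ lam := fun b hb => hSlam (hCS hb)
    -- reachability from an element of C stays in C
    have reach_S : ∀ {x y : ℕ × ℕ}, Relation.ReflTransGen r x y → x ∈ S → y ∈ S := by
      intro x y h hx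
      induction h with
      | refl => exact hx
      | tail h1 h2 ih => exact h2.2.1
    have reach_C : ∀ b ∈ C, ∀ b', Relation.ReflTransGen r b b' → b' ∈ C := by
      intro b hb b' hbb'
      exact (hCmem b').2 ⟨reach_S hbb' (hCS hb), (((hCmem b).1 hb).2).trans hbb'⟩
    -- C is an upper set of lam
    have hCupper : ∀ b ∈ C, ∀ b' ∈ lam, b ≤ b' → b' ∈ C := by
      intro b hb b' hb'lam hle
      have hbS := hCS hb
      have hblam := hSlam hbS
      have hbne : n b ≠ 0 := ((hSmem b).1 hbS).2
      have hpath : Relation.ReflTransGen r b b' := by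
        refine path_of_le hle fun x hbx hxb' => ?_
        have hxlam : x ∈ lam := young_le hlam hxb' hb'lam
        have : n b ≤ n x := hn.2 b hblam x hxlam hbx
        exact (hSmem x).2 ⟨hxlam, by omega⟩
      exact reach_C b hb b' hpath
    -- comparable elements of S with the smaller in C force the larger in C, and conversely
    have hcomp_sym : ∀ b ∈ S, ∀ b' ∈ C, b ≤ b' → b ∈ C := by
      intro b hbS b' hb'C hle
      have hblam := hSlam hbS
      have hbne : n b ≠ 0 := ((hSmem b).1 hbS).2
      have hpath : Relation.ReflTransGen r b b' := by
        refine path_of_le hle fun x hbx hxb' => ?_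
        have hxlam : x ∈ lam := young_le hlam hxb' (hClam hb'C)
        have : n b ≤ n x := hn.2 b hblam x hxlam hbx
        exact (hSmem x).2 ⟨hxlam, by omega⟩
      have hrsymm : Symmetric r := by
        intro x y hxy; exact ⟨hxy.2.1, hxy.1, adj_symm hxy.2.2⟩
      have hpath' : Relation.ReflTransGen r b' b :=
        (@Relation.ReflTransGen.symmetric _ r ⟨fun _ _ h => hrsymm h⟩).symm _ _ hpath
      exact reach_C b' hb'C b hpath'
    -- write n = boxIndicator C + m
    set m : ℕ × ℕ → ℕ := fun b => n b - boxIndicator C b with hmdef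
    have hnC1 : ∀ b ∈ C, 1 ≤ n b := by
      intro b hb
      have := ((hSmem b).1 (hCS hb)).2
      omega
    have hsum : n = boxIndicator C + m := by
      funext b
      by_cases hb : b ∈ C
      · have := hnC1 b hb
        simp only [Pi.add_apply, hmdef, boxIndicator, if_pos hb]
        omega
      · simp [hmdef, boxIndicator, if_neg hb]
    have hyRPP : IsRPP lam (boxIndicator C) := by
      constructor
      · intro b hb
        have hbC : b ∉ C := fun h => hb (hClam h)
        simp [boxIndicator, hbC]
      · intro b hb b' hb' hle
        by_cases hbC : b ∈ C
        · have := hCupper b hbC b' hb' hle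
          simp [boxIndicator, hbC, this]
        · simp only [boxIndicator, if_neg hbC]
          exact Nat.zero_le _
    have hzRPP : IsRPP lam m := by
      constructor
      · intro b hb
        have h1 : n b = 0 := hn.1 b hb
        have h2 : b ∉ C := fun h => hb (hClam h)
        simp [hmdef, h1, boxIndicator, h2]
      · intro b hb b' hb' hle
        have hmono : n b ≤ n b' := hn.2 b hb b' hb' hle
        by_cases hbC : b ∈ C
        · have hb'C : b' ∈ C := hCupper b hbC b' hb' hle
          have := hnC1 b hbC
          simp only [hmdef, boxIndicator, if_pos hbC, if_pos hb'C]
          omega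
        · by_cases hbS : b ∈ S
          · have hb'nC : b' ∉ C := fun h => hbC (hcomp_sym b hbS b' h hle)
            simp only [hmdef, boxIndicator, if_neg hbC, if_neg hb'nC]
            omega
          · have : n b = 0 := by
              by_cases hblam : b ∈ lam
              · by_contra h; exact hbS ((hSmem b).2 ⟨hblam, h⟩)
              · exact hn.1 b hblam
            simp only [hmdef, boxIndicator, if_neg hbC, this]
            omega
    rcases hirr (boxIndicator C) m hyRPP hzRPP hsum with h | h
    · exfalso
      have := congrFun h b0
      simp [boxIndicator, hb0C, Pi.zero_apply] at this
    · refine ⟨C, ⟨hClam, hCupper⟩, ⟨b0, hb0C⟩, ?_, ?_⟩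
      · -- connectivity of C
        have reach_in_C : ∀ x, Relation.ReflTransGen r b0 x →
            Relation.ReflTransGen (fun a b => a ∈ C ∧ b ∈ C ∧ Adj a b) b0 x := by
          intro x hx
          induction hx with
          | refl => exact Relation.ReflTransGen.refl
          | @tail y z h1 h2 ih =>
            have hyC : y ∈ C := (hCmem y).2 ⟨h2.1, h1⟩
            have hzC : z ∈ C := (hCmem z).2 ⟨h2.2.1, h1.tail h2⟩
            exact ih.tail ⟨hyC, hzC, h2.2.2⟩
        intro a ha b hb
        have hsymm : Symmetric (fun a b => a ∈ C ∧ b ∈ C ∧ Adj a b) := by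
          intro x y hxy; exact ⟨hxy.2.1, hxy.1, adj_symm hxy.2.2⟩
        have h1 := reach_in_C a ((hCmem a).1 ha).2
        have h2 := reach_in_C b ((hCmem b).1 hb).2
        exact ((@Relation.ReflTransGen.symmetric _ _ ⟨fun _ _ h => hsymm h⟩).symm _ _ h1).trans h2
      · rw [hsum, h]
        funext b; simp
  · rintro ⟨U, ⟨hUlam, hUup⟩, ⟨u, hu⟩, hUconn, rfl⟩
    constructor
    · intro h
      have := congrFun h u
      simp [boxIndicator, hu] at this
    · intro y z hy hz heq
      by_contra h
      push_neg at h
      obtain ⟨hy0, hz0⟩ := h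
      obtain ⟨a, ha⟩ : ∃ a, y a ≠ 0 := by
        by_contra h; push_neg at h; exact hy0 (funext h)
      obtain ⟨c, hc⟩ : ∃ c, z c ≠ 0 := by
        by_contra h; push_neg at h; exact hz0 (funext h)
      have halam : a ∈ lam := by by_contra h; exact ha (hy.1 a h)
      have hclam : c ∈ lam := by by_contra h; exact hc (hz.1 c h)
      have key : ∀ b, boxIndicator U b = y b + z b := fun b => congrFun heq b
      have haU : a ∈ U := by
        have := key a; by_contra h
        simp [boxIndicator, h] at this
        omega
      have hcU : c ∈ U := by
        have := key c; by_contra h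
        simp [boxIndicator, h] at this
        omega
      have hyc : y c = 0 := by
        have := key c; simp [boxIndicator, hcU] at this; omega
      have hpath := hUconn a haU c hcU
      obtain ⟨x, x', ⟨hxU, hx'U, hadj⟩, hPx, hPx'⟩ :=
        exists_boundary (P := fun b => y b ≠ 0) hpath ha (by simpa using hyc)
      have hxlam : x ∈ lam := hUlam hxU
      have hx'lam : x' ∈ lam := hUlam hx'U
      have hyx' : y x' = 0 := by simpa using hPx'
      have hkx : boxIndicator U x = y x + z x := key x
      have hkx' : boxIndicator U x' = y x' + z x' := key x'
      simp only [boxIndicator, if_pos hxU] at hkx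
      simp only [boxIndicator, if_pos hx'U] at hkx'
      rcases adj_comparable hadj with hle | hle
      · have := hy.2 x hxlam x' hx'lam hle
        omega
      · have := hz.2 x' hx'lam x hxlam hle
        omega
end

section
/- A reverse plane partition n of shape λ is a Young indicator if and only if its weight ω(n) = Σ_{(i,j)∈λ} Δn(i,j) equals 1, where Δn(i,j) = n(i,j) − n(i−1,j) − n(i,j−1) + n(i−1,j−1) (extending n by zero outside λ). -/
open scoped Classical

namespace RPP5

lemma downclosed_card (S : Finset ℕ) (h : ∀ j, j + 1 ∈ S → j ∈ S) (k : ℕ) :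
    k ∈ S ↔ k < S.card := by
  have hdown : ∀ k, k ∈ S → ∀ j, j ≤ k → j ∈ S := by
    intro k
    induction k with
    | zero => intro hk j hj; simpa [Nat.le_zero.mp hj] using hk
    | succ k ih =>
      intro hk j hj
      rcases Nat.lt_or_ge j (k + 1) with h1 | h1
      · exact ih (h k hk) j (Nat.lt_succ_iff.mp h1)
      · have : j = k + 1 := le_antisymm hj h1
        simpa [this] using hk
  constructor
  · intro hk
    have hsub : Finset.range (k + 1) ⊆ S := by
      intro m hm
      exact hdown k hk m (Nat.lt_succ_iff.mp (Finset.mem_range.mp hm))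
    have := Finset.card_le_card hsub
    simpa using this
  · intro hk
    by_contra hkS
    have hsub : S ⊆ Finset.range k := by
      intro m hm
      rcases Nat.lt_or_ge m k with h1 | h1
      · exact Finset.mem_range.mpr h1
      · exact absurd (hdown m hm k h1) hkS
    have := Finset.card_le_card hsub
    simp at this; omega

noncomputable def L (lam : Finset (ℕ × ℕ)) (i : ℕ) : ℕ :=
  ((lam.filter (fun b => b.1 = i)).image Prod.snd).card

lemma mem_L {lam : Finset (ℕ × ℕ)} (hlam : IsYoung lam) (i j : ℕ) :
    (i, j) ∈ lam ↔ j < L lam i := by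
  have hmem : ∀ j, j ∈ (lam.filter (fun b => b.1 = i)).image Prod.snd ↔ (i, j) ∈ lam := by
    intro j
    simp only [Finset.mem_image, Finset.mem_filter]
    constructor
    · rintro ⟨b, ⟨hb, hb1⟩, hb2⟩
      have : b = (i, j) := by
        ext <;> simp_all
      rwa [this] at hb
    · intro hb; exact ⟨(i, j), ⟨hb, rfl⟩, rfl⟩
  rw [← hmem j]
  exact downclosed_card _ (fun j hj => (hmem j).mpr ((hlam i j).2 ((hmem (j+1)).mp hj))) j

lemma L_antitone {lam : Finset (ℕ × ℕ)} (hlam : IsYoung lam) (i : ℕ) :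
    L lam (i + 1) ≤ L lam i := by
  by_contra hcon
  push_neg at hcon
  have h1 : (i + 1, L lam i) ∈ lam := (mem_L hlam _ _).mpr hcon
  have h2 : (i, L lam i) ∈ lam := (hlam i (L lam i)).1 h1
  exact absurd ((mem_L hlam _ _).mp h2) (lt_irrefl _)

noncomputable def g (n : ℕ × ℕ → ℕ) (i j : ℕ) : ℤ :=
  (n (i, j) : ℤ) - (if i = 0 then 0 else (n (i - 1, j) : ℤ))

lemma delta_eq_g (n : ℕ × ℕ → ℕ) (i j : ℕ) :
    delta n (i, j) = g n i j - (if j = 0 then 0 else g n i (j - 1)) := by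
  simp only [delta, g]
  by_cases h1 : i = 0 <;> by_cases h2 : j = 0 <;> simp [h1, h2] <;> ring

lemma telescope (h : ℕ → ℤ) (m : ℕ) :
    ∑ j ∈ Finset.range m, (h j - if j = 0 then 0 else h (j - 1)) =
      if 0 < m then h (m - 1) else 0 := by
  induction m with
  | zero => simp
  | succ m ih =>
    rw [Finset.sum_range_succ, ih]
    rcases Nat.eq_zero_or_pos m with rfl | hm
    · simp
    · have hm' : m ≠ 0 := Nat.pos_iff_ne_zero.mp hm
      simp [hm, hm']

lemma sum_lam_eq {lam : Finset (ℕ × ℕ)} (hlam : IsYoung lam) (F : ℕ × ℕ → ℤ) (N : ℕ)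
    (hN : ∀ b ∈ lam, b.1 < N ∧ b.2 < N) :
    ∑ b ∈ lam, F b = ∑ i ∈ Finset.range N, ∑ j ∈ Finset.range (L lam i), F (i, j) := by
  have hLN : ∀ i, L lam i ≤ N := by
    intro i
    rcases Nat.eq_zero_or_pos (L lam i) with h | h
    · omega
    · have : (i, L lam i - 1) ∈ lam := (mem_L hlam _ _).mpr (by omega)
      have := (hN _ this).2
      omega
  have h1 : lam = (Finset.range N ×ˢ Finset.range N).filter (fun b => b ∈ lam) := by
    ext b
    simp only [Finset.mem_filter, Finset.mem_product, Finset.mem_range]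
    exact ⟨fun hb => ⟨⟨(hN b hb).1, (hN b hb).2⟩, hb⟩, fun hb => hb.2⟩
  conv_lhs => rw [h1]
  rw [Finset.sum_filter, Finset.sum_product]
  refine Finset.sum_congr rfl fun i _ => ?_
  have h2 : ∀ j, (i, j) ∈ lam ↔ j < L lam i := fun j => mem_L hlam i j
  rw [← Finset.sum_filter]
  have h3 : (Finset.range N).filter (fun j => (i, j) ∈ lam) = Finset.range (L lam i) := by
    ext j
    simp only [Finset.mem_filter, Finset.mem_range, h2]
    have := hLN i
    omega
  rw [h3]

lemma weight_eq {lam : Finset (ℕ × ℕ)} (hlam : IsYoung lam) (n : ℕ × ℕ → ℕ) (N : ℕ)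
    (hN : ∀ b ∈ lam, b.1 < N ∧ b.2 < N) :
    weight lam n =
      ∑ i ∈ Finset.range N, (if 0 < L lam i then g n i (L lam i - 1) else 0) := by
  rw [weight, sum_lam_eq hlam (delta n) N hN]
  refine Finset.sum_congr rfl fun i _ => ?_
  calc ∑ j ∈ Finset.range (L lam i), delta n (i, j)
      = ∑ j ∈ Finset.range (L lam i), (g n i j - if j = 0 then 0 else g n i (j - 1)) :=
        Finset.sum_congr rfl fun j _ => delta_eq_g n i j
    _ = _ := telescope _ _


section Upper

variable {lam U : Finset (ℕ × ℕ)}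

/-- all of a row of `lam` to the right of a `U`-cell is in `U`. -/
lemma U_mono (hlam : IsYoung lam) (hU : IsUpper lam U) {i j j' : ℕ}
    (h : (i, j) ∈ U) (hjj : j ≤ j') (hj' : j' < L lam i) : (i, j') ∈ U :=
  hU.2 _ h _ ((mem_L hlam i j').mpr hj') (Prod.mk_le_mk.mpr ⟨le_refl i, hjj⟩)

lemma rowEnd (hlam : IsYoung lam) (hU : IsUpper lam U) {i j : ℕ}
    (h : (i, j) ∈ U) : (i, L lam i - 1) ∈ U := by
  have hj : j < L lam i := (mem_L hlam i j).mp (hU.1 h)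
  exact U_mono hlam hU h (by omega) (by omega)

lemma K1 (hlam : IsYoung lam) (hU : IsUpper lam U) {i : ℕ} (hi : i ≠ 0)
    (hL : 0 < L lam i) (h : (i - 1, L lam i - 1) ∈ U) : (i, L lam i - 1) ∈ U := by
  refine hU.2 _ h _ ((mem_L hlam _ _).mpr (by omega)) (Prod.mk_le_mk.mpr ⟨by omega, le_refl _⟩)

/-- the row term for an indicator. -/
noncomputable def t (lam U : Finset (ℕ × ℕ)) (i : ℕ) : ℤ :=
  if 0 < L lam i then
    ((if (i, L lam i - 1) ∈ U then (1 : ℤ) else 0)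
      - (if i = 0 then 0 else if (i - 1, L lam i - 1) ∈ U then (1 : ℤ) else 0))
  else 0

lemma g_ind (i j : ℕ) :
    g (boxIndicator U) i j =
      (if (i, j) ∈ U then (1 : ℤ) else 0) - (if i = 0 then 0 else if (i - 1, j) ∈ U then (1 : ℤ) else 0) := by
  simp only [g, boxIndicator]
  by_cases h1 : i = 0 <;> simp [h1, apply_ite (Nat.cast : ℕ → ℤ)]

lemma weight_ind_eq (hlam : IsYoung lam) (N : ℕ) (hN : ∀ b ∈ lam, b.1 < N ∧ b.2 < N) :
    weight lam (boxIndicator U) = ∑ i ∈ Finset.range N, t lam U i := by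
  rw [weight_eq hlam (boxIndicator U) N hN]
  refine Finset.sum_congr rfl fun i _ => ?_
  unfold t
  by_cases h : 0 < L lam i
  · rw [if_pos h, if_pos h, g_ind]
  · rw [if_neg h, if_neg h]

lemma t_nonneg (hlam : IsYoung lam) (hU : IsUpper lam U) (i : ℕ) : 0 ≤ t lam U i := by
  unfold t
  by_cases hL : 0 < L lam i
  · rw [if_pos hL]
    by_cases hi : i = 0
    · rw [if_pos hi]
      split_ifs <;> norm_num
    · rw [if_neg hi]
      by_cases hB : (i - 1, L lam i - 1) ∈ U
      · rw [if_pos hB, if_pos (K1 hlam hU hi hL hB)]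
        norm_num
      · rw [if_neg hB]
        split_ifs <;> norm_num
  · rw [if_neg hL]

lemma t_eq_zero_of_not_meets (hlam : IsYoung lam) (hU : IsUpper lam U) {i : ℕ}
    (hrow : ∀ j, (i, j) ∉ U) : t lam U i = 0 := by
  unfold t
  by_cases hL : 0 < L lam i
  · rw [if_pos hL, if_neg (hrow _)]
    by_cases hi : i = 0
    · rw [if_pos hi]; ring
    · rw [if_neg hi]
      have hB : (i - 1, L lam i - 1) ∉ U := fun h => hrow _ (K1 hlam hU hi hL h)
      rw [if_neg hB]; ring
  · rw [if_neg hL]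

lemma t_le_one (hlam : IsYoung lam) (hU : IsUpper lam U) (i : ℕ) : t lam U i ≤ 1 := by
  unfold t
  split_ifs <;> norm_num


lemma adj_symm {x y : ℕ × ℕ} (h : Adj x y) : Adj y x := by
  simp only [Adj] at h ⊢; omega

lemma rel_symm {U : Finset (ℕ × ℕ)} :
    Symmetric (fun x y => x ∈ U ∧ y ∈ U ∧ Adj x y) :=
  fun _ _ h => ⟨h.2.1, h.1, adj_symm h.2.2⟩

lemma crossing {U : Finset (ℕ × ℕ)} {i : ℕ} {a c : ℕ × ℕ}
    (h : Relation.ReflTransGen (fun x y => x ∈ U ∧ y ∈ U ∧ Adj x y) a c)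
    (ha : i ≤ a.1) (hc : c.1 < i) : ∃ j, (i, j) ∈ U ∧ (i - 1, j) ∈ U := by
  revert hc
  induction h with
  | refl => omega
  | @tail b c hab hbc ih =>
    intro hc
    by_cases hb : b.1 < i
    · exact ih hb
    · push_neg at hb
      obtain ⟨hbU, hcU, hadj⟩ := hbc
      rcases hadj with ⟨h1, _⟩ | ⟨h2, h3 | h3⟩
      · omega
      · have hbi : b.1 = i := by omega
        have hci : c.1 = i - 1 := by omega
        refine ⟨b.2, ?_, ?_⟩
        · have : (i, b.2) = b := by rw [Prod.ext_iff]; exact ⟨by omega, rfl⟩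
          rwa [this]
        · have : (i - 1, b.2) = c := by rw [Prod.ext_iff]; exact ⟨by omega, h2⟩
          rwa [this]
      · omega

lemma horiz (hlam : IsYoung lam) (hU : IsUpper lam U) {i j : ℕ} (d : ℕ)
    (hjU : (i, j) ∈ U) (hd : j + d < L lam i) :
    Relation.ReflTransGen (fun x y => x ∈ U ∧ y ∈ U ∧ Adj x y) (i, j) (i, j + d) := by
  induction d with
  | zero => exact .refl
  | succ d ih =>
    have h1 : (i, j + d) ∈ U := U_mono hlam hU hjU (by omega) (by omega)
    have h2 : (i, j + d + 1) ∈ U := U_mono hlam hU hjU (by omega) (by omega)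
    exact (ih (by omega)).tail ⟨h1, h2, Or.inl ⟨rfl, Or.inr rfl⟩⟩

lemma connect_top (hlam : IsYoung lam) (hU : IsUpper lam U) {i0 : ℕ}
    (hmin : ∀ b ∈ U, i0 ≤ b.1)
    (hstep : ∀ i, i ≠ i0 → (∃ j, (i, j) ∈ U) → i ≠ 0 ∧ (i - 1, L lam i - 1) ∈ U) :
    ∀ i, ∀ a ∈ U, a.1 = i →
      Relation.ReflTransGen (fun x y => x ∈ U ∧ y ∈ U ∧ Adj x y) a (i0, L lam i0 - 1) := by
  intro i
  induction i using Nat.strong_induction_on with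
  | _ i ih =>
    rintro ⟨i', j⟩ haU rfl
    have hj : j < L lam i' := (mem_L hlam _ _).mp (hU.1 haU)
    have hend : (i', L lam i' - 1) ∈ U := rowEnd hlam hU haU
    have p1 : Relation.ReflTransGen (fun x y => x ∈ U ∧ y ∈ U ∧ Adj x y)
        (i', j) (i', L lam i' - 1) := by
      have := horiz hlam hU (L lam i' - 1 - j) haU (by omega)
      have heq : j + (L lam i' - 1 - j) = L lam i' - 1 := by omega
      rwa [heq] at this
    by_cases hii : i' = i0
    · subst hii; exact p1
    · obtain ⟨hne0, hB⟩ := hstep i' hii ⟨j, haU⟩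
      have hstep1 : (fun x y => x ∈ U ∧ y ∈ U ∧ Adj x y)
          (i', L lam i' - 1) (i' - 1, L lam i' - 1) :=
        ⟨hend, hB, Or.inr ⟨rfl, Or.inl (by omega)⟩⟩
      have hrec := ih (i' - 1) (by omega) (i' - 1, L lam i' - 1) hB rfl
      exact (p1.tail hstep1).trans hrec

lemma t_min_row (hlam : IsYoung lam) (hU : IsUpper lam U) {i0 j0 : ℕ}
    (hj0 : (i0, j0) ∈ U) (hmin : ∀ b ∈ U, i0 ≤ b.1) : t lam U i0 = 1 := by
  have hj : j0 < L lam i0 := (mem_L hlam _ _).mp (hU.1 hj0)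
  have hL : 0 < L lam i0 := by omega
  have hA : (i0, L lam i0 - 1) ∈ U := rowEnd hlam hU hj0
  unfold t
  rw [if_pos hL, if_pos hA]
  by_cases hi : i0 = 0
  · rw [if_pos hi]; ring
  · rw [if_neg hi]
    have hB : (i0 - 1, L lam i0 - 1) ∉ U := fun h => by
      have : i0 ≤ i0 - 1 := hmin _ h
      omega
    rw [if_neg hB]; ring

lemma t_eq_zero_of_B (hlam : IsYoung lam) (hU : IsUpper lam U) {i : ℕ}
    (hL : 0 < L lam i) (hi : i ≠ 0) (hB : (i - 1, L lam i - 1) ∈ U) : t lam U i = 0 := by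
  unfold t
  rw [if_pos hL, if_pos (K1 hlam hU hi hL hB), if_neg hi, if_pos hB]
  ring


noncomputable def NB (lam : Finset (ℕ × ℕ)) : ℕ := 1 + lam.sup (fun b => max b.1 b.2)

lemma NB_bound {lam : Finset (ℕ × ℕ)} : ∀ b ∈ lam, b.1 < NB lam ∧ b.2 < NB lam := by
  intro b hb
  have h : max b.1 b.2 ≤ lam.sup (fun b : ℕ × ℕ => max b.1 b.2) :=
    Finset.le_sup (f := fun b : ℕ × ℕ => max b.1 b.2) hb
  unfold NB
  omega

lemma weight_ind_nonneg (hlam : IsYoung lam) (hU : IsUpper lam U) :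
    0 ≤ weight lam (boxIndicator U) := by
  rw [weight_ind_eq hlam (NB lam) NB_bound]
  exact Finset.sum_nonneg fun i _ => t_nonneg hlam hU i

lemma weight_ind_ge_one (hlam : IsYoung lam) (hU : IsUpper lam U) (hne : U.Nonempty) :
    1 ≤ weight lam (boxIndicator U) := by
  obtain ⟨b0, hb0U⟩ := hne
  set i0 := (U.image Prod.fst).min' (hb0U |> fun h => ⟨b0.1, Finset.mem_image_of_mem _ h⟩) with hi0
  have hi0mem : i0 ∈ U.image Prod.fst := Finset.min'_mem _ _
  obtain ⟨c0, hc0U, hc0⟩ := Finset.mem_image.mp hi0mem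
  have hmin : ∀ b ∈ U, i0 ≤ b.1 := fun b hb => Finset.min'_le _ _ (Finset.mem_image_of_mem _ hb)
  have hj0 : (i0, c0.2) ∈ U := by
    have : (i0, c0.2) = c0 := by rw [Prod.ext_iff]; exact ⟨hc0.symm, rfl⟩
    rwa [this]
  have ht1 : t lam U i0 = 1 := t_min_row hlam hU hj0 hmin
  have hi0range : i0 ∈ Finset.range (NB lam) := by
    have := (NB_bound _ (hU.1 hj0)).1
    exact Finset.mem_range.mpr this
  rw [weight_ind_eq hlam (NB lam) NB_bound]
  calc (1 : ℤ) = t lam U i0 := ht1.symm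
    _ ≤ _ := Finset.single_le_sum (fun i _ => t_nonneg hlam hU i) hi0range

lemma weight_ind_one (hlam : IsYoung lam) (hU : IsUpper lam U) (hne : U.Nonempty)
    (hconn : ConnectedIn U) : weight lam (boxIndicator U) = 1 := by
  obtain ⟨b0, hb0U⟩ := hne
  set i0 := (U.image Prod.fst).min' ⟨b0.1, Finset.mem_image_of_mem _ hb0U⟩ with hi0
  have hi0mem : i0 ∈ U.image Prod.fst := Finset.min'_mem _ _
  obtain ⟨c0, hc0U, hc0⟩ := Finset.mem_image.mp hi0mem
  have hmin : ∀ b ∈ U, i0 ≤ b.1 := fun b hb => Finset.min'_le _ _ (Finset.mem_image_of_mem _ hb)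
  have hj0 : (i0, c0.2) ∈ U := by
    have : (i0, c0.2) = c0 := by rw [Prod.ext_iff]; exact ⟨hc0.symm, rfl⟩
    rwa [this]
  have hi0range : i0 ∈ Finset.range (NB lam) := by
    exact Finset.mem_range.mpr (NB_bound _ (hU.1 hj0)).1
  rw [weight_ind_eq hlam (NB lam) NB_bound]
  rw [Finset.sum_eq_single_of_mem i0 hi0range]
  · exact t_min_row hlam hU hj0 hmin
  · intro i _ hine
    by_cases hrow : ∃ j, (i, j) ∈ U
    · obtain ⟨j, hjU⟩ := hrow
      have hii0 : i0 ≤ i := hmin (i, j) hjU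
      have hilt : i0 < i := by omega
      have hpath := hconn (i, j) hjU (i0, c0.2) hj0
      obtain ⟨jj, hjj1, hjj2⟩ := crossing hpath (le_refl i) hilt
      have hjjL : jj < L lam i := (mem_L hlam _ _).mp (hU.1 hjj1)
      have hL : 0 < L lam i := by omega
      have hmem : (i - 1, L lam i - 1) ∈ lam := by
        have h5 := (hlam (i - 1) (L lam i - 1)).1
        rw [show i - 1 + 1 = i by omega] at h5
        exact h5 ((mem_L hlam _ _).mpr (by omega))
      have hB : (i - 1, L lam i - 1) ∈ U :=
        hU.2 _ hjj2 _ hmem (Prod.mk_le_mk.mpr ⟨le_refl _, by omega⟩)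
      exact t_eq_zero_of_B hlam hU hL (by omega) hB
    · push_neg at hrow
      exact t_eq_zero_of_not_meets hlam hU hrow

lemma conn_of_weight_one (hlam : IsYoung lam) (hU : IsUpper lam U) (hne : U.Nonempty)
    (hw : weight lam (boxIndicator U) = 1) : ConnectedIn U := by
  obtain ⟨b0, hb0U⟩ := hne
  set i0 := (U.image Prod.fst).min' ⟨b0.1, Finset.mem_image_of_mem _ hb0U⟩ with hi0
  have hi0mem : i0 ∈ U.image Prod.fst := Finset.min'_mem _ _
  obtain ⟨c0, hc0U, hc0⟩ := Finset.mem_image.mp hi0mem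
  have hmin : ∀ b ∈ U, i0 ≤ b.1 := fun b hb => Finset.min'_le _ _ (Finset.mem_image_of_mem _ hb)
  have hj0 : (i0, c0.2) ∈ U := by
    have : (i0, c0.2) = c0 := by rw [Prod.ext_iff]; exact ⟨hc0.symm, rfl⟩
    rwa [this]
  have hi0range : i0 ∈ Finset.range (NB lam) := by
    exact Finset.mem_range.mpr (NB_bound _ (hU.1 hj0)).1
  rw [weight_ind_eq hlam (NB lam) NB_bound] at hw
  have ht1 : t lam U i0 = 1 := t_min_row hlam hU hj0 hmin
  have herase : ∑ i ∈ (Finset.range (NB lam)).erase i0, t lam U i = 0 := by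
    have := Finset.add_sum_erase _ (t lam U) hi0range
    omega
  have hzero : ∀ i ∈ (Finset.range (NB lam)).erase i0, t lam U i = 0 :=
    (Finset.sum_eq_zero_iff_of_nonneg (fun i _ => t_nonneg hlam hU i)).mp herase
  have hstep : ∀ i, i ≠ i0 → (∃ j, (i, j) ∈ U) → i ≠ 0 ∧ (i - 1, L lam i - 1) ∈ U := by
    intro i hine ⟨j, hjU⟩
    have hjL : j < L lam i := (mem_L hlam _ _).mp (hU.1 hjU)
    have hL : 0 < L lam i := by omega
    have hir : i ∈ (Finset.range (NB lam)).erase i0 :=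
      Finset.mem_erase.mpr ⟨hine, Finset.mem_range.mpr (NB_bound _ (hU.1 hjU)).1⟩
    have ht := hzero i hir
    have hA : (i, L lam i - 1) ∈ U := rowEnd hlam hU hjU
    unfold t at ht
    rw [if_pos hL, if_pos hA] at ht
    by_cases hi : i = 0
    · rw [if_pos hi] at ht; norm_num at ht
    · rw [if_neg hi] at ht
      by_cases hB : (i - 1, L lam i - 1) ∈ U
      · exact ⟨hi, hB⟩
      · rw [if_neg hB] at ht; norm_num at ht
  have hconn := connect_top hlam hU hmin hstep
  intro a ha b hb
  have pa := hconn a.1 a ha rfl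
  have pb := hconn b.1 b hb rfl
  exact pa.trans ((@Relation.ReflTransGen.symmetric _ _ ⟨rel_symm⟩).symm _ _ pb)

end Upper





lemma delta_sum {s : Finset ℕ} {f : ℕ → ℕ × ℕ → ℕ} {n : ℕ × ℕ → ℕ}
    (hn : ∀ b, n b = ∑ k ∈ s, f k b) (b : ℕ × ℕ) :
    delta n b = ∑ k ∈ s, delta (f k) b := by
  by_cases h1 : b.1 = 0 <;> by_cases h2 : b.2 = 0 <;>
    simp [delta, hn, h1, h2, Nat.cast_sum, Finset.sum_sub_distrib, Finset.sum_add_distrib]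

lemma weight_sum {lam : Finset (ℕ × ℕ)} {s : Finset ℕ} {f : ℕ → ℕ × ℕ → ℕ}
    {n : ℕ × ℕ → ℕ} (hn : ∀ b, n b = ∑ k ∈ s, f k b) :
    weight lam n = ∑ k ∈ s, weight lam (f k) := by
  unfold weight
  rw [Finset.sum_congr rfl (fun b _ => delta_sum hn b), Finset.sum_comm]

end RPP5

open RPP5

/-- A reverse plane partition is a Young indicator iff its weight equals 1. -/
theorem stmt5 (lam : Finset (ℕ × ℕ)) (hlam : IsYoung lam)
    (n : ℕ × ℕ → ℕ) (hn : IsRPP lam n) :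
    IsYoungIndicator lam n ↔ weight lam n = 1 := by
  constructor
  · rintro ⟨U, hU, hne, hconn, rfl⟩
    exact weight_ind_one hlam hU hne hconn
  · intro hw
    set M := lam.sup n with hM
    set Uk := fun k => lam.filter (fun c => k ≤ n c) with hUk
    have hupper : ∀ k, IsUpper lam (Uk k) := by
      intro k
      refine ⟨Finset.filter_subset _ _, ?_⟩
      intro b hb b' hb' hle
      rw [hUk, Finset.mem_filter] at hb ⊢
      exact ⟨hb', le_trans hb.2 (hn.2 b hb.1 b' hb' hle)⟩
    have hbound : ∀ b ∈ lam, n b ≤ M := fun b hb => Finset.le_sup hb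
    have hdec : ∀ b, n b = ∑ k ∈ Finset.Icc 1 M, boxIndicator (Uk k) b := by
      intro b
      by_cases hb : b ∈ lam
      · have h1 : ∀ k ∈ Finset.Icc 1 M, boxIndicator (Uk k) b = if k ≤ n b then 1 else 0 := by
          intro k _
          simp [boxIndicator, hUk, Finset.mem_filter, hb]
        rw [Finset.sum_congr rfl h1, ← Finset.sum_filter]
        have hfe : (Finset.Icc 1 M).filter (fun k => k ≤ n b) = Finset.Icc 1 (n b) := by
          ext k
          simp only [Finset.mem_filter, Finset.mem_Icc]
          have := hbound b hb
          omega
        rw [hfe, Finset.sum_const, smul_eq_mul, mul_one, Nat.card_Icc]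
        omega
      · rw [hn.1 b hb]
        symm
        refine Finset.sum_eq_zero fun k _ => ?_
        simp [boxIndicator, hUk, Finset.mem_filter, hb]
    have hwsum : weight lam n = ∑ k ∈ Finset.Icc 1 M, weight lam (boxIndicator (Uk k)) :=
      weight_sum hdec
    have hne1 : (Uk 1).Nonempty := by
      rw [Finset.nonempty_iff_ne_empty]
      intro hempty
      have hz : ∀ b, n b = 0 := by
        intro b
        by_cases hb : b ∈ lam
        · by_contra hnb
          have hmem : b ∈ Uk 1 := by
            rw [hUk, Finset.mem_filter]; exact ⟨hb, by omega⟩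
          rw [hempty] at hmem
          simp at hmem
        · exact hn.1 b hb
      have : weight lam n = 0 := by
        unfold weight
        exact Finset.sum_eq_zero fun b _ => by simp [delta, hz]
      omega
    have hM1 : 1 ≤ M := by
      obtain ⟨b, hb⟩ := hne1
      rw [hUk, Finset.mem_filter] at hb
      have := hbound b hb.1
      omega
    have h1mem : 1 ∈ Finset.Icc 1 M := Finset.mem_Icc.mpr ⟨le_refl _, hM1⟩
    have hw1le : 1 ≤ weight lam (boxIndicator (Uk 1)) :=
      weight_ind_ge_one hlam (hupper 1) hne1
    have herase : ∑ k ∈ (Finset.Icc 1 M).erase 1, weight lam (boxIndicator (Uk k)) = 0 := by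
      have hsplit : weight lam (boxIndicator (Uk 1))
            + ∑ k ∈ (Finset.Icc 1 M).erase 1, weight lam (boxIndicator (Uk k))
          = ∑ k ∈ Finset.Icc 1 M, weight lam (boxIndicator (Uk k)) :=
        Finset.add_sum_erase _ (fun k => weight lam (boxIndicator (Uk k))) h1mem
      have hrest : 0 ≤ ∑ k ∈ (Finset.Icc 1 M).erase 1, weight lam (boxIndicator (Uk k)) :=
        Finset.sum_nonneg fun k _ => weight_ind_nonneg hlam (hupper k)
      rw [hwsum] at hw
      omega
    have hzero : ∀ k ∈ (Finset.Icc 1 M).erase 1, weight lam (boxIndicator (Uk k)) = 0 :=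
      (Finset.sum_eq_zero_iff_of_nonneg
        (fun k _ => weight_ind_nonneg hlam (hupper k))).mp herase
    have hw1eq : weight lam (boxIndicator (Uk 1)) = 1 := by
      have hsplit : weight lam (boxIndicator (Uk 1))
            + ∑ k ∈ (Finset.Icc 1 M).erase 1, weight lam (boxIndicator (Uk k))
          = ∑ k ∈ Finset.Icc 1 M, weight lam (boxIndicator (Uk k)) :=
        Finset.add_sum_erase _ (fun k => weight lam (boxIndicator (Uk k))) h1mem
      rw [hwsum] at hw
      omega
    have hempty2 : ∀ k, 2 ≤ k → Uk k = ∅ := by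
      intro k hk
      rw [← Finset.not_nonempty_iff_eq_empty]
      intro hnek
      have hkM : k ≤ M := by
        obtain ⟨b, hb⟩ := hnek
        rw [hUk, Finset.mem_filter] at hb
        have := hbound b hb.1
        omega
      have hker : k ∈ (Finset.Icc 1 M).erase 1 :=
        Finset.mem_erase.mpr ⟨by omega, Finset.mem_Icc.mpr ⟨by omega, hkM⟩⟩
      have := hzero k hker
      have := weight_ind_ge_one hlam (hupper k) hnek
      omega
    have hind : n = boxIndicator (Uk 1) := by
      funext b
      by_cases hb : b ∈ lam
      · have hble : n b ≤ 1 := by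
          by_contra h
          push_neg at h
          have hmem : b ∈ Uk 2 := by
            rw [hUk, Finset.mem_filter]; exact ⟨hb, by omega⟩
          rw [hempty2 2 (le_refl _)] at hmem
          simp at hmem
        simp only [boxIndicator, hUk, Finset.mem_filter, hb, true_and]
        split_ifs with h <;> omega
      · rw [hn.1 b hb]
        simp [boxIndicator, hUk, Finset.mem_filter, hb]
    exact ⟨Uk 1, hupper 1, hne1, conn_of_weight_one hlam (hupper 1) hne1 hw1eq, hind⟩
end

section
/- If χ_U is a Young indicator with U a nonempty connected upper set of λ, then the derivative Δχ_U takes value 1 exactly on the minimal elements of U, value −1 exactly on the boxes (i₂,j₁), (i₃,j₂), …, (i_t,j_{t−1}) where (i₁,j₁),…,(i_t,j_t) are the minimal elements of U ordered so that i₁ < ⋯ < i_t and j₁ > ⋯ > j_t, and value 0 elsewhere; in particular −1 ≤ Δχ_U(i,j) ≤ 1 for all (i,j) ∈ λ. -/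
open scoped Classical

private lemma delta_eval (U : Finset (ℕ × ℕ)) (b : ℕ × ℕ) :
    delta (boxIndicator U) b =
      (if b ∈ U then (1:ℤ) else 0)
      - (if 1 ≤ b.1 ∧ (b.1 - 1, b.2) ∈ U then 1 else 0)
      - (if 1 ≤ b.2 ∧ (b.1, b.2 - 1) ∈ U then 1 else 0)
      + (if 1 ≤ b.1 ∧ 1 ≤ b.2 ∧ (b.1 - 1, b.2 - 1) ∈ U then 1 else 0) := by
  rcases b with ⟨i, j⟩
  have e : ∀ p : ℕ × ℕ, ((boxIndicator U p : ℤ)) = if p ∈ U then (1:ℤ) else 0 := by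
    intro p; unfold boxIndicator; split_ifs <;> simp
  rcases Nat.eq_zero_or_pos i with hi | hi <;> rcases Nat.eq_zero_or_pos j with hj | hj
  · subst hi; subst hj
    simp [delta, e]
  · subst hi
    have hj' : j ≠ 0 := by omega
    have h1j : 1 ≤ j := hj
    simp [delta, e, hj', h1j]
  · subst hj
    have hi' : i ≠ 0 := by omega
    have h1i : 1 ≤ i := hi
    simp [delta, e, hi', h1i]
  · have hi' : i ≠ 0 := by omega
    have hj' : j ≠ 0 := by omega
    have h1i : 1 ≤ i := hi
    have h1j : 1 ≤ j := hj
    simp [delta, e, hi', hj', h1i, h1j]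

private lemma young_down_s6 {lam : Finset (ℕ × ℕ)} (hlam : IsYoung lam) :
    ∀ a b : ℕ × ℕ, b ∈ lam → a ≤ b → a ∈ lam := by
  have h1 : ∀ k i j, (i + k, j) ∈ lam → (i, j) ∈ lam := by
    intro k
    induction k with
    | zero => exact fun i j h => h
    | succ n ih => exact fun i j h => ih i j ((hlam (i + n) j).1 h)
  have h2 : ∀ k i j, (i, j + k) ∈ lam → (i, j) ∈ lam := by
    intro k
    induction k with
    | zero => exact fun i j h => h
    | succ n ih => exact fun i j h => ih i j ((hlam i (j + n)).2 h)
  intro a b hb hab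
  obtain ⟨k, hk⟩ := Nat.le.dest (Prod.le_def.mp hab).1
  obtain ⟨l, hl⟩ := Nat.le.dest (Prod.le_def.mp hab).2
  apply h1 k; apply h2 l
  have he : ((a.1 + k, a.2 + l) : ℕ × ℕ) = b := by
    rw [Prod.ext_iff]; exact ⟨hk, hl⟩
  exact he ▸ hb

/-- The derivative of a Young indicator χ_U takes value 1 exactly on the minimal
elements of U, −1 exactly on the boxes `((m (h+1)).1, (m h).2)` interpolating
consecutive minimal elements, 0 elsewhere; in particular it lies in [−1,1]. -/
theorem stmt6 (lam : Finset (ℕ × ℕ)) (hlam : IsYoung lam)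
    (U : Finset (ℕ × ℕ)) (hU : IsUpper lam U) (hne : U.Nonempty)
    (hconn : ConnectedIn U)
    (t : ℕ) (m : ℕ → ℕ × ℕ)
    (hmin : ∀ b, (b ∈ U ∧ ∀ a ∈ U, a ≤ b → a = b) ↔ ∃ h < t, m h = b)
    (hi : StrictMonoOn (fun h => (m h).1) (Set.Iio t))
    (hj : StrictAntiOn (fun h => (m h).2) (Set.Iio t)) :
    (∀ h < t, delta (boxIndicator U) (m h) = 1) ∧
    (∀ h, h + 1 < t → delta (boxIndicator U) ((m (h + 1)).1, (m h).2) = -1) ∧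
    (∀ b ∈ lam, (¬ ∃ h < t, m h = b) →
      (¬ ∃ h, h + 1 < t ∧ b = ((m (h + 1)).1, (m h).2)) →
      delta (boxIndicator U) b = 0) ∧
    ∀ b ∈ lam, -1 ≤ delta (boxIndicator U) b ∧ delta (boxIndicator U) b ≤ 1 := by
  obtain ⟨hUl, hUup⟩ := hU
  have hdown := young_down_s6 hlam
  -- every element of U lies above some minimal element
  have hexmin : ∀ b ∈ U, ∃ h < t, m h ≤ b := by
    have key : ∀ n, ∀ b ∈ U, b.1 + b.2 ≤ n → ∃ h < t, m h ≤ b := by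
      intro n
      induction n with
      | zero =>
        intro b hb hn
        have hmin' : ∀ a ∈ U, a ≤ b → a = b := by
          intro a ha hab
          obtain ⟨h1, h2⟩ := Prod.le_def.mp hab
          exact Prod.ext_iff.mpr ⟨by omega, by omega⟩
        obtain ⟨h, ht', he⟩ := (hmin b).mp ⟨hb, hmin'⟩
        exact ⟨h, ht', he.le⟩
      | succ n ih =>
        intro b hb hn
        by_cases hbm : ∀ a ∈ U, a ≤ b → a = b
        · obtain ⟨h, ht', he⟩ := (hmin b).mp ⟨hb, hbm⟩
          exact ⟨h, ht', he.le⟩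
        · push_neg at hbm
          obtain ⟨a, ha, hab, hne'⟩ := hbm
          obtain ⟨h1, h2⟩ := Prod.le_def.mp hab
          have hcoord : a.1 ≠ b.1 ∨ a.2 ≠ b.2 := by
            by_contra hc; push_neg at hc
            exact hne' (Prod.ext_iff.mpr ⟨hc.1, hc.2⟩)
          have hsum : a.1 + a.2 ≤ n := by rcases hcoord with h | h <;> omega
          obtain ⟨h, ht', hle⟩ := ih a ha hsum
          exact ⟨h, ht', hle.trans hab⟩
    intro b hb; exact key (b.1 + b.2) b hb le_rfl
  have hmUmem : ∀ h < t, m h ∈ U := fun h hh => ((hmin (m h)).mpr ⟨h, hh, rfl⟩).1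
  have hmemU : ∀ b : ℕ × ℕ, b ∈ lam → (∃ h < t, m h ≤ b) → b ∈ U := by
    rintro b hb ⟨h, hh, hle⟩
    exact hUup _ (hmUmem h hh) b hb hle
  -- the corner boxes lie in lam (uses connectivity)
  have hcorner_lam : ∀ h, h + 1 < t → ((m (h + 1)).1, (m h).2) ∈ lam := by
    intro h hht
    by_contra hc
    have hhlt : h < t := by omega
    have claim1 : ∀ u ∈ U, u.2 < (m h).2 → (m (h + 1)).1 ≤ u.1 := by
      intro u hu hu2
      obtain ⟨g, hg, hgle⟩ := hexmin u hu
      obtain ⟨hg1, hg2⟩ := Prod.le_def.mp hgle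
      rcases le_or_gt g h with hgh | hgh
      · exfalso
        have : (m h).2 ≤ (m g).2 :=
          hj.antitoneOn (Set.mem_Iio.mpr (by omega)) (Set.mem_Iio.mpr hhlt) hgh
        omega
      · have : (m (h + 1)).1 ≤ (m g).1 :=
          hi.monotoneOn (Set.mem_Iio.mpr hht) (Set.mem_Iio.mpr hg) (by omega)
        omega
    have claim2 : ∀ u ∈ U, (m h).2 ≤ u.2 → u.1 < (m (h + 1)).1 := by
      intro u hu hu2
      by_contra hle
      push_neg at hle
      exact hc (hdown _ u (hUl hu) (Prod.le_def.mpr ⟨hle, hu2⟩))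
    have hstep : ∀ x y : ℕ × ℕ, x ∈ U → y ∈ U → Adj x y →
        (m h).2 ≤ x.2 → (m h).2 ≤ y.2 := by
      intro x y hx hy hadj hxs
      by_contra hys
      push_neg at hys
      have h1 := claim1 y hy hys
      have h2 := claim2 x hx hxs
      rcases hadj with ⟨he, _⟩ | ⟨he, _⟩ <;> omega
    have key : ∀ b : ℕ × ℕ,
        Relation.ReflTransGen (fun x y => x ∈ U ∧ y ∈ U ∧ Adj x y) (m h) b →
        (m h).2 ≤ b.2 := by
      intro b hb
      induction hb with
      | refl => exact le_rfl
      | tail hsub hst ih => exact hstep _ _ hst.1 hst.2.1 hst.2.2 ih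
    have h1 := key _ (hconn (m h) (hmUmem h hhlt) (m (h + 1)) (hmUmem (h + 1) hht))
    have h2 : (m (h + 1)).2 < (m h).2 :=
      hj (Set.mem_Iio.mpr hhlt) (Set.mem_Iio.mpr hht) (lt_add_one h)
    omega
  -- Part 1
  have P1 : ∀ h < t, delta (boxIndicator U) (m h) = 1 := by
    intro h hh
    obtain ⟨hmU, hminimal⟩ := (hmin (m h)).mpr ⟨h, hh, rfl⟩
    rw [delta_eval]
    have hB : ¬(1 ≤ (m h).1 ∧ ((m h).1 - 1, (m h).2) ∈ U) := by
      rintro ⟨h1, h2⟩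
      have he := hminimal _ h2 (Prod.le_def.mpr ⟨by omega, le_rfl⟩)
      have := congrArg Prod.fst he
      simp at this; omega
    have hC : ¬(1 ≤ (m h).2 ∧ ((m h).1, (m h).2 - 1) ∈ U) := by
      rintro ⟨h1, h2⟩
      have he := hminimal _ h2 (Prod.le_def.mpr ⟨le_rfl, by omega⟩)
      have := congrArg Prod.snd he
      simp at this; omega
    have hD : ¬(1 ≤ (m h).1 ∧ 1 ≤ (m h).2 ∧ ((m h).1 - 1, (m h).2 - 1) ∈ U) := by
      rintro ⟨h1, h2, h3⟩
      have he := hminimal _ h3 (Prod.le_def.mpr ⟨by omega, by omega⟩)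
      have := congrArg Prod.fst he
      simp at this; omega
    rw [if_pos hmU, if_neg hB, if_neg hC, if_neg hD]
    ring
  -- Part 2
  have P2 : ∀ h, h + 1 < t →
      delta (boxIndicator U) ((m (h + 1)).1, (m h).2) = -1 := by
    intro h hht
    have hhlt : h < t := by omega
    have hblam := hcorner_lam h hht
    have hi1 : (m h).1 < (m (h + 1)).1 :=
      hi (Set.mem_Iio.mpr hhlt) (Set.mem_Iio.mpr hht) (lt_add_one h)
    have hj1 : (m (h + 1)).2 < (m h).2 :=
      hj (Set.mem_Iio.mpr hhlt) (Set.mem_Iio.mpr hht) (lt_add_one h)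
    set i := (m (h + 1)).1 with hidef
    set j := (m h).2 with hjdef
    have hAmem : (i, j) ∈ U :=
      hmemU _ hblam ⟨h, hhlt, Prod.le_def.mpr ⟨hi1.le, le_rfl⟩⟩
    have hBmem : (i - 1, j) ∈ U := by
      apply hmemU (i - 1, j) (hdown (i - 1, j) (i, j) hblam (Prod.le_def.mpr ⟨by omega, le_rfl⟩))
      exact ⟨h, hhlt, Prod.le_def.mpr ⟨by omega, le_rfl⟩⟩
    have hCmem : (i, j - 1) ∈ U := by
      apply hmemU (i, j - 1) (hdown (i, j - 1) (i, j) hblam (Prod.le_def.mpr ⟨le_rfl, by omega⟩))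
      exact ⟨h + 1, hht, Prod.le_def.mpr ⟨le_rfl, by omega⟩⟩
    have hDnot : (i - 1, j - 1) ∉ U := by
      intro hD
      obtain ⟨g, hg, hgle⟩ := hexmin _ hD
      obtain ⟨hg1, hg2⟩ := Prod.le_def.mp hgle
      have hglt : g < h + 1 := by
        by_contra hge; push_neg at hge
        have : (m (h + 1)).1 ≤ (m g).1 :=
          hi.monotoneOn (Set.mem_Iio.mpr hht) (Set.mem_Iio.mpr hg) hge
        omega
      have : (m h).2 ≤ (m g).2 :=
        hj.antitoneOn (Set.mem_Iio.mpr (by omega)) (Set.mem_Iio.mpr hhlt) (by omega)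
      omega
    rw [delta_eval]
    simp only
    rw [if_pos hAmem, if_pos ⟨by omega, hBmem⟩, if_pos ⟨by omega, hCmem⟩,
      if_neg (by rintro ⟨-, -, hD⟩; exact hDnot hD)]
    ring
  -- Part 3
  have P3 : ∀ b ∈ lam, (¬ ∃ h < t, m h = b) →
      (¬ ∃ h, h + 1 < t ∧ b = ((m (h + 1)).1, (m h).2)) →
      delta (boxIndicator U) b = 0 := by
    intro b hb hnm hnc
    rw [delta_eval]
    by_cases hA : b ∈ U
    · by_cases hB : 1 ≤ b.1 ∧ (b.1 - 1, b.2) ∈ U <;>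
        by_cases hC : 1 ≤ b.2 ∧ (b.1, b.2 - 1) ∈ U
      · -- both lower neighbours in U : diagonal must be in U, else corner
        have hD : 1 ≤ b.1 ∧ 1 ≤ b.2 ∧ (b.1 - 1, b.2 - 1) ∈ U := by
          refine ⟨hB.1, hC.1, ?_⟩
          by_contra hDn
          apply hnc
          obtain ⟨g', hg', hg'le⟩ := hexmin _ hB.2
          obtain ⟨g, hg, hgle⟩ := hexmin _ hC.2
          have hdl : (b.1 - 1, b.2 - 1) ∈ lam :=
            hdown _ b hb (Prod.le_def.mpr ⟨by omega, by omega⟩)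
          have hnotin : ∀ k, k < t → ¬ m k ≤ (b.1 - 1, b.2 - 1) := by
            intro k hk hkle
            exact hDn (hmemU _ hdl ⟨k, hk, hkle⟩)
          obtain ⟨hg'1, hg'2⟩ := Prod.le_def.mp hg'le
          obtain ⟨hg1, hg2⟩ := Prod.le_def.mp hgle
          simp only at hg'1 hg'2 hg1 hg2
          have hgi : (m g).1 = b.1 := by
            by_contra hne'
            exact hnotin g hg (Prod.le_def.mpr ⟨by omega, hg2⟩)
          have hg'j : (m g').2 = b.2 := by
            by_contra hne'
            exact hnotin g' hg' (Prod.le_def.mpr ⟨hg'1, by omega⟩)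
          have hlt : g' < g := by
            have h1 : (m g').1 < (m g).1 := by omega
            exact (hi.lt_iff_lt (Set.mem_Iio.mpr hg') (Set.mem_Iio.mpr hg)).mp h1
          have hsucc : g = g' + 1 := by
            by_contra hne'
            have hk : g' + 1 < g := by omega
            have hkt : g' + 1 < t := by omega
            have h1 : (m (g' + 1)).1 < (m g).1 :=
              hi (Set.mem_Iio.mpr hkt) (Set.mem_Iio.mpr hg) hk
            have h2 : (m (g' + 1)).2 < (m g').2 :=
              hj (Set.mem_Iio.mpr hg') (Set.mem_Iio.mpr hkt) (lt_add_one g')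
            exact hnotin (g' + 1) hkt (Prod.le_def.mpr ⟨by omega, by omega⟩)
          refine ⟨g', by omega, ?_⟩
          subst hsucc
          exact (Prod.ext_iff.mpr ⟨hgi.symm, hg'j.symm⟩ :
            b = ((m (g' + 1)).1, (m g').2))
        rw [if_pos hA, if_pos hB, if_pos hC, if_pos hD]; ring
      · have hD : ¬(1 ≤ b.1 ∧ 1 ≤ b.2 ∧ (b.1 - 1, b.2 - 1) ∈ U) := by
          rintro ⟨h1, h2, h3⟩
          refine hC ⟨h2, ?_⟩
          exact hUup _ h3 _ (hdown _ b hb (Prod.le_def.mpr ⟨le_rfl, by omega⟩))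
            (Prod.le_def.mpr ⟨by omega, le_rfl⟩)
        rw [if_pos hA, if_pos hB, if_neg hC, if_neg hD]; ring
      · have hD : ¬(1 ≤ b.1 ∧ 1 ≤ b.2 ∧ (b.1 - 1, b.2 - 1) ∈ U) := by
          rintro ⟨h1, h2, h3⟩
          refine hB ⟨h1, ?_⟩
          exact hUup _ h3 _ (hdown _ b hb (Prod.le_def.mpr ⟨by omega, le_rfl⟩))
            (Prod.le_def.mpr ⟨le_rfl, by omega⟩)
        rw [if_pos hA, if_neg hB, if_pos hC, if_neg hD]; ring
      · exfalso
        apply hnm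
        apply (hmin b).mp
        refine ⟨hA, ?_⟩
        intro a ha hab
        obtain ⟨h1, h2⟩ := Prod.le_def.mp hab
        by_contra hne'
        have hcoord : a.1 < b.1 ∨ a.2 < b.2 := by
          rcases Nat.lt_or_ge a.1 b.1 with h | h
          · exact Or.inl h
          · right
            have : a.1 = b.1 := by omega
            rcases Nat.lt_or_ge a.2 b.2 with h' | h'
            · exact h'
            · exact absurd (Prod.ext_iff.mpr ⟨this, by omega⟩) hne'
        rcases hcoord with h | h
        · refine hB ⟨by omega, ?_⟩
          exact hUup _ ha _ (hdown _ b hb (Prod.le_def.mpr ⟨by omega, le_rfl⟩))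
            (Prod.le_def.mpr ⟨by omega, h2⟩)
        · refine hC ⟨by omega, ?_⟩
          exact hUup _ ha _ (hdown _ b hb (Prod.le_def.mpr ⟨le_rfl, by omega⟩))
            (Prod.le_def.mpr ⟨h1, by omega⟩)
    · have hB : ¬(1 ≤ b.1 ∧ (b.1 - 1, b.2) ∈ U) := by
        rintro ⟨h1, h2⟩
        exact hA (hUup _ h2 b hb (Prod.le_def.mpr ⟨by omega, le_rfl⟩))
      have hC : ¬(1 ≤ b.2 ∧ (b.1, b.2 - 1) ∈ U) := by
        rintro ⟨h1, h2⟩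
        exact hA (hUup _ h2 b hb (Prod.le_def.mpr ⟨le_rfl, by omega⟩))
      have hD : ¬(1 ≤ b.1 ∧ 1 ≤ b.2 ∧ (b.1 - 1, b.2 - 1) ∈ U) := by
        rintro ⟨h1, h2, h3⟩
        exact hA (hUup _ h3 b hb (Prod.le_def.mpr ⟨by omega, by omega⟩))
      rw [if_neg hA, if_neg hB, if_neg hC, if_neg hD]; ring
  refine ⟨P1, P2, P3, ?_⟩
  intro b hb
  by_cases h1 : ∃ h < t, m h = b
  · obtain ⟨h, ht', he⟩ := h1
    rw [← he, P1 h ht']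
    exact ⟨by norm_num, le_rfl⟩
  · by_cases h2 : ∃ h, h + 1 < t ∧ b = ((m (h + 1)).1, (m h).2)
    · obtain ⟨h, ht', he⟩ := h2
      rw [he, P2 h ht']
      exact ⟨le_rfl, by norm_num⟩
    · rw [P3 b hb h1 h2]
      exact ⟨by norm_num, by norm_num⟩
end

section
/- The monoid RPP^λ of reverse plane partitions of shape λ is half-factorial: for any reverse plane partition n, every factorisation of n as a sum of Young indicators has length equal to the weight ω(n). In particular any two factorisations of n into Young indicators have the same number of summands (counted with multiplicity). -/
open scoped Classical

-- rows of lam are initial segments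
lemma young_row {lam : Finset (ℕ × ℕ)} (hlam : IsYoung lam) :
    ∀ (i d j : ℕ), (i, j + d) ∈ lam → (i, j) ∈ lam := by
  intro i d
  induction d with
  | zero => intro j h; exact h
  | succ d ih =>
    intro j h
    exact ih j ((hlam i (j + d)).2 (by rw [show j + d + 1 = j + (d+1) by omega]; exact h))

lemma young_row' {lam : Finset (ℕ × ℕ)} (hlam : IsYoung lam) {i j j' : ℕ}
    (h : (i, j) ∈ lam) (hle : j' ≤ j) : (i, j') ∈ lam := by
  obtain ⟨d, rfl⟩ := Nat.exists_eq_add_of_le hle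
  exact young_row hlam i d j' h

lemma prod_le_iff {a b : ℕ × ℕ} : a ≤ b ↔ a.1 ≤ b.1 ∧ a.2 ≤ b.2 := Prod.le_def

-- path facts
lemma adj_fst {a b : ℕ × ℕ} (h : Adj a b) :
    a.1 = b.1 ∨ b.1 = a.1 + 1 ∨ a.1 = b.1 + 1 := by
  rcases h with ⟨h1, _⟩ | ⟨_, h2⟩
  · exact Or.inl h1
  · rcases h2 with h | h
    · exact Or.inr (Or.inr h)
    · exact Or.inr (Or.inl h)

lemma path_contig {U : Finset (ℕ × ℕ)} {a b : ℕ × ℕ}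
    (hp : Relation.ReflTransGen (fun x y => x ∈ U ∧ y ∈ U ∧ Adj x y) a b)
    (ha : a ∈ U) : ∀ k, a.1 ≤ k → k ≤ b.1 → ∃ m, (k, m) ∈ U := by
  induction hp using Relation.ReflTransGen.head_induction_on with
  | refl =>
    intro k h1 h2
    have hk : k = b.1 := le_antisymm h2 h1
    exact ⟨b.2, by rw [hk]; simpa using ha⟩
  | head hac _ ih =>
    rename_i x c _
    intro k h1 h2
    by_cases hk : c.1 ≤ k
    · exact ih hac.2.1 k hk h2
    · push_neg at hk
      have : k = x.1 := by
        rcases adj_fst hac.2.2 with h | h | h <;> omega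
      exact ⟨x.2, by rw [this]; exact hac.1⟩

lemma path_overlap {U : Finset (ℕ × ℕ)} {a b : ℕ × ℕ}
    (hp : Relation.ReflTransGen (fun x y => x ∈ U ∧ y ∈ U ∧ Adj x y) a b) :
    ∀ i, a.1 ≤ i → i + 1 ≤ b.1 → ∃ k, (i, k) ∈ U ∧ (i + 1, k) ∈ U := by
  induction hp using Relation.ReflTransGen.head_induction_on with
  | refl => intro i h1 h2; omega
  | head hac _ ih =>
    rename_i x c _
    intro i h1 h2
    by_cases hk : c.1 ≤ i
    · exact ih i hk h2
    · push_neg at hk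
      have hc1 : c.1 = x.1 + 1 := by
        rcases adj_fst hac.2.2 with h | h | h <;> omega
      have hix : i = x.1 := by omega
      have hsnd : x.2 = c.2 := by
        rcases hac.2.2 with ⟨h1', _⟩ | ⟨h2', _⟩
        · omega
        · exact h2'
      refine ⟨x.2, ?_, ?_⟩
      · rw [hix]; exact hac.1
      · have : (i + 1, x.2) = c := by
          rw [hix, hsnd]; rw [← hc1]
        rw [this]; exact hac.2.1

lemma row_card_eq (U : Finset (ℕ × ℕ)) (i0 : ℕ) (Q : ℕ → Prop) [DecidablePred Q] :
    (U.filter (fun c => c.1 = i0 ∧ Q c.2)).card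
      = (((U.filter (fun c => c.1 = i0)).image Prod.snd).filter Q).card := by
  have h1 : ((U.filter (fun c => c.1 = i0)).image Prod.snd).filter Q
      = (U.filter (fun c => c.1 = i0 ∧ Q c.2)).image Prod.snd := by
    ext j
    simp only [Finset.mem_filter, Finset.mem_image]
    constructor
    · rintro ⟨⟨c, ⟨hc, h0⟩, rfl⟩, hQ⟩
      exact ⟨c, ⟨hc, h0, hQ⟩, rfl⟩
    · rintro ⟨c, ⟨hc, h0, hQ⟩, rfl⟩
      exact ⟨⟨c, ⟨hc, h0⟩, rfl⟩, hQ⟩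
  rw [h1, Finset.card_image_of_injOn]
  intro x hx y hy hxy
  simp only [Finset.coe_filter, Set.mem_setOf_eq] at hx hy
  have : x.1 = y.1 := by rw [hx.2.1, hy.2.1]
  exact Prod.ext this hxy

lemma split_card (U : Finset (ℕ × ℕ)) (i0 : ℕ) (hmin : ∀ c ∈ U, i0 ≤ c.1)
    (f : ℕ × ℕ → ℕ × ℕ) (hf : ∀ c ∈ U, ¬c.1 = i0 → ¬(f c).1 = i0) :
    (U.filter (fun c => f c ∈ U)).card
      = ((U.filter (fun c => ¬c.1 = i0)).filter
          (fun c => f c ∈ U.filter (fun c => ¬c.1 = i0))).card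
        + (((U.filter (fun c => c.1 = i0)).image Prod.snd).filter
            (fun j => f (i0, j) ∈ U)).card := by
  have key := Finset.card_filter_add_card_filter_not
    (s := U.filter (fun c => f c ∈ U)) (p := fun c => c.1 = i0)
  have h1 : (U.filter (fun c => f c ∈ U)).filter (fun c => c.1 = i0)
      = U.filter (fun c => c.1 = i0 ∧ f (i0, c.2) ∈ U) := by
    ext c
    simp only [Finset.mem_filter]
    constructor
    · rintro ⟨⟨hc, hfc⟩, h0⟩
      have hce : (i0, c.2) = c := by rw [← h0]
      exact ⟨hc, h0, by rwa [hce]⟩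
    · rintro ⟨hc, h0, hfc⟩
      have hce : (i0, c.2) = c := by rw [← h0]
      exact ⟨⟨hc, by rwa [← hce]⟩, h0⟩
  have h2 : (U.filter (fun c => f c ∈ U)).filter (fun c => ¬c.1 = i0)
      = (U.filter (fun c => ¬c.1 = i0)).filter
          (fun c => f c ∈ U.filter (fun c => ¬c.1 = i0)) := by
    ext c
    simp only [Finset.mem_filter]
    constructor
    · rintro ⟨⟨hc, hfc⟩, h0⟩
      exact ⟨⟨hc, h0⟩, hfc, hf c hc h0⟩
    · rintro ⟨⟨hc, h0⟩, hfc, _⟩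
      exact ⟨⟨hc, hfc⟩, h0⟩
  rw [h1, h2, row_card_eq U i0 (fun j => f (i0, j) ∈ U)] at key
  omega

def chiZ (U : Finset (ℕ × ℕ)) : ℤ :=
  (U.card : ℤ) - (U.filter (fun c => (c.1 + 1, c.2) ∈ U)).card
    - (U.filter (fun c => (c.1, c.2 + 1) ∈ U)).card
    + (U.filter (fun c => (c.1 + 1, c.2 + 1) ∈ U)).card

def OverlapP (U : Finset (ℕ × ℕ)) : Prop :=
  ∀ i j j', (i, j) ∈ U → (i + 1, j') ∈ U → ∃ k, (i, k) ∈ U ∧ (i + 1, k) ∈ U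

def ContigP (U : Finset (ℕ × ℕ)) : Prop :=
  ∀ i j i' j' k, (i, j) ∈ U → (i', j') ∈ U → i ≤ k → k ≤ i' → ∃ m, (k, m) ∈ U

lemma row_interval {lam U : Finset (ℕ × ℕ)} (hlam : IsYoung lam) (hup : IsUpper lam U)
    {i a b j : ℕ} (ha : (i, a) ∈ U) (hb : (i, b) ∈ U) (h1 : a ≤ j) (h2 : j ≤ b) :
    (i, j) ∈ U :=
  hup.2 _ ha _ (young_row' hlam (hup.1 hb) h2) (by simp [Prod.le_def, h1])

lemma chi_eq_one {lam : Finset (ℕ × ℕ)} (hlam : IsYoung lam) :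
    ∀ N (U : Finset (ℕ × ℕ)), U.card ≤ N → IsUpper lam U → U.Nonempty →
      OverlapP U → ContigP U → chiZ U = 1 := by
  intro N
  induction N with
  | zero =>
    intro U hcard hup hne _ _
    have := Finset.card_pos.mpr hne
    omega
  | succ N ih =>
    intro U hcard hup hne hov hcont
    set F := U.image Prod.fst with hF
    have hFne : F.Nonempty := hne.image _
    set i0 := F.min' hFne with hi0
    have hmin : ∀ c ∈ U, i0 ≤ c.1 := fun c hc =>
      Finset.min'_le _ _ (Finset.mem_image_of_mem _ hc)
    set J := (U.filter (fun c => c.1 = i0)).image Prod.snd with hJdef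
    have hmemJ : ∀ j, j ∈ J ↔ (i0, j) ∈ U := by
      intro j
      simp only [hJdef, Finset.mem_image, Finset.mem_filter]
      constructor
      · rintro ⟨c, ⟨hc, h1⟩, h2⟩
        have : (i0, j) = c := by rw [← h1, ← h2]
        rwa [this]
      · intro h; exact ⟨(i0, j), ⟨h, rfl⟩, rfl⟩
    have hJne : J.Nonempty := by
      obtain ⟨c, hc, hc1⟩ := Finset.mem_image.mp (F.min'_mem hFne)
      refine ⟨c.2, (hmemJ c.2).mpr ?_⟩
      have : (i0, c.2) = c := by rw [← hi0] at hc1; rw [← hc1]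
      rwa [this]
    set a := J.min' hJne with ha
    set b := J.max' hJne with hb
    have haU : (i0, a) ∈ U := (hmemJ a).mp (J.min'_mem _)
    have hbU : (i0, b) ∈ U := (hmemJ b).mp (J.max'_mem _)
    have hab : a ≤ b := Finset.min'_le _ _ (J.max'_mem _)
    have hJi : ∀ j, j ∈ J ↔ a ≤ j ∧ j ≤ b := by
      intro j
      constructor
      · intro h; exact ⟨Finset.min'_le _ _ h, Finset.le_max' _ _ h⟩
      · rintro ⟨h1, h2⟩
        exact (hmemJ j).mpr (row_interval hlam hup haU hbU h1 h2)
    -- the three split identities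
    have hfA : ∀ c ∈ U, ¬c.1 = i0 → ¬((fun c : ℕ × ℕ => (c.1 + 1, c.2)) c).1 = i0 := by
      intro c hc h0; have := hmin c hc; simp; omega
    have hfB : ∀ c ∈ U, ¬c.1 = i0 → ¬((fun c : ℕ × ℕ => (c.1, c.2 + 1)) c).1 = i0 := by
      intro c hc h0; simpa using h0
    have hfC : ∀ c ∈ U, ¬c.1 = i0 → ¬((fun c : ℕ × ℕ => (c.1 + 1, c.2 + 1)) c).1 = i0 := by
      intro c hc h0; have := hmin c hc; simp; omega
    set U' := U.filter (fun c => ¬c.1 = i0) with hU'def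
    have hA : (U.filter (fun c => (c.1 + 1, c.2) ∈ U)).card
        = (U'.filter (fun c => (c.1 + 1, c.2) ∈ U')).card
          + (J.filter (fun j => (i0 + 1, j) ∈ U)).card :=
      split_card U i0 hmin (fun c => (c.1 + 1, c.2)) hfA
    have hB : (U.filter (fun c => (c.1, c.2 + 1) ∈ U)).card
        = (U'.filter (fun c => (c.1, c.2 + 1) ∈ U')).card
          + (J.filter (fun j => (i0, j + 1) ∈ U)).card :=
      split_card U i0 hmin (fun c => (c.1, c.2 + 1)) hfB
    have hC : (U.filter (fun c => (c.1 + 1, c.2 + 1) ∈ U)).card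
        = (U'.filter (fun c => (c.1 + 1, c.2 + 1) ∈ U')).card
          + (J.filter (fun j => (i0 + 1, j + 1) ∈ U)).card :=
      split_card U i0 hmin (fun c => (c.1 + 1, c.2 + 1)) hfC
    have hcardsplit : (U.filter (fun c => c.1 = i0)).card + U'.card = U.card :=
      Finset.card_filter_add_card_filter_not (s := U) (p := fun c : ℕ × ℕ => c.1 = i0)
    have hRcard : (U.filter (fun c => c.1 = i0)).card = J.card := by
      rw [hJdef, Finset.card_image_of_injOn]
      intro x hx y hy hxy
      simp only [Finset.coe_filter, Set.mem_setOf_eq] at hx hy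
      exact Prod.ext (by rw [hx.2, hy.2]) hxy
    have hJcard : J.card = b + 1 - a := by
      have : J = Finset.Icc a b := by
        ext j; rw [hJi]; simp
      rw [this, Nat.card_Icc]
    have hmemU' : ∀ c : ℕ × ℕ, c ∈ U' ↔ c ∈ U ∧ ¬c.1 = i0 := by
      intro c; rw [hU'def]; simp
    by_cases hU'ne : U'.Nonempty
    · -- inductive case: at least two rows
      obtain ⟨c0, hc0⟩ := hU'ne
      have hc0' := (hmemU' c0).mp hc0
      have hc0U : c0 ∈ U := hc0'.1
      have hc0top : i0 + 1 ≤ c0.1 := by have := hmin c0 hc0U; omega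
      -- row i0+1 is nonempty
      obtain ⟨m0, hm0⟩ : ∃ m, (i0 + 1, m) ∈ U := by
        refine hcont i0 a c0.1 c0.2 (i0 + 1) haU ?_ (by omega) hc0top
        simpa using hc0U
      set J' := (U.filter (fun c => c.1 = i0 + 1)).image Prod.snd with hJ'def
      have hmemJ' : ∀ j, j ∈ J' ↔ (i0 + 1, j) ∈ U := by
        intro j
        simp only [hJ'def, Finset.mem_image, Finset.mem_filter]
        constructor
        · rintro ⟨c, ⟨hc, h1⟩, h2⟩
          have : (i0 + 1, j) = c := by rw [← h1, ← h2]
          rwa [this]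
        · intro h; exact ⟨(i0 + 1, j), ⟨h, rfl⟩, rfl⟩
      have hJ'ne : J'.Nonempty := ⟨m0, (hmemJ' m0).mpr hm0⟩
      set a' := J'.min' hJ'ne with ha'
      set b' := J'.max' hJ'ne with hb'
      have ha'U : (i0 + 1, a') ∈ U := (hmemJ' a').mp (J'.min'_mem _)
      have hb'U : (i0 + 1, b') ∈ U := (hmemJ' b').mp (J'.max'_mem _)
      have hJ'i : ∀ j, j ∈ J' ↔ a' ≤ j ∧ j ≤ b' := by
        intro j
        constructor
        · intro h; exact ⟨Finset.min'_le _ _ h, Finset.le_max' _ _ h⟩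
        · rintro ⟨h1, h2⟩
          exact (hmemJ' j).mpr (row_interval hlam hup ha'U hb'U h1 h2)
      obtain ⟨j0, hj0, hj0'⟩ := hov i0 a a' haU ha'U
      have hj0J := (hJi j0).mp ((hmemJ j0).mpr hj0)
      have hj0J' := (hJ'i j0).mp ((hmemJ' j0).mpr hj0')
      -- (i0+1, a) ∈ U
      have hatop : (i0 + 1, a) ∈ U :=
        hup.2 _ haU _ (young_row' hlam (hup.1 hj0') hj0J.1)
          (by simp [Prod.le_def])
      have ha'a : a' ≤ a := Finset.min'_le _ _ ((hmemJ' a).mpr hatop)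
      have hab' : a ≤ b' := le_trans hj0J.1 hj0J'.2
      have hb'b : b' ≤ b := by
        have h1 : (i0, b') ∈ lam := (hlam i0 b').1 (hup.1 hb'U)
        have h2 : (i0, b') ∈ U := hup.2 _ haU _ h1 (by simp [Prod.le_def, hab'])
        exact Finset.le_max' _ _ ((hmemJ b').mpr h2)
      -- the three row filter sets
      have hAset : J.filter (fun j => (i0 + 1, j) ∈ U) = Finset.Icc a b' := by
        ext j
        simp only [Finset.mem_filter, Finset.mem_Icc]
        rw [hJi, ← hmemJ', hJ'i]
        omega
      have hBset : J.filter (fun j => (i0, j + 1) ∈ U) = Finset.Ico a b := by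
        ext j
        simp only [Finset.mem_filter, Finset.mem_Ico]
        rw [hJi, ← hmemJ, hJi]
        omega
      have hCset : J.filter (fun j => (i0 + 1, j + 1) ∈ U) = Finset.Ico a b' := by
        ext j
        simp only [Finset.mem_filter, Finset.mem_Ico]
        rw [hJi, ← hmemJ', hJ'i]
        omega
      -- apply induction hypothesis to U'
      have hU'card : U'.card ≤ N := by
        have hR1 : 1 ≤ (U.filter (fun c => c.1 = i0)).card := by
          rw [hRcard]
          exact Finset.card_pos.mpr hJne
        omega
      have hU'up : IsUpper lam U' := by
        constructor
        · intro c hc; exact hup.1 ((hmemU' c).mp hc).1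
        · intro c hc c' hc' hle
          obtain ⟨hcU, hc0⟩ := (hmemU' c).mp hc
          refine (hmemU' c').mpr ⟨hup.2 _ hcU _ hc' hle, ?_⟩
          have := hmin c hcU
          have := hle.1
          omega
      have hU'ov : OverlapP U' := by
        intro i j j' h1 h2
        obtain ⟨h1U, h1i⟩ := (hmemU' _).mp h1
        obtain ⟨h2U, _⟩ := (hmemU' _).mp h2
        obtain ⟨k, hk1, hk2⟩ := hov i j j' h1U h2U
        have hi := hmin _ h1U
        refine ⟨k, (hmemU' _).mpr ⟨hk1, by simpa using h1i⟩, (hmemU' _).mpr ⟨hk2, ?_⟩⟩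
        simp only at hi ⊢
        simp only at h1i
        omega
      have hU'cont : ContigP U' := by
        intro i j i' j' k h1 h2 hik hki
        obtain ⟨h1U, h1i⟩ := (hmemU' _).mp h1
        obtain ⟨h2U, _⟩ := (hmemU' _).mp h2
        obtain ⟨m, hm⟩ := hcont i j i' j' k h1U h2U hik hki
        have hi := hmin _ h1U
        refine ⟨m, (hmemU' _).mpr ⟨hm, ?_⟩⟩
        simp only at h1i hi ⊢
        omega
      have hIH : chiZ U' = 1 := ih U' hU'card hU'up ⟨c0, hc0⟩ hU'ov hU'cont
      -- assemble
      rw [hAset, Nat.card_Icc] at hA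
      rw [hBset, Nat.card_Ico] at hB
      rw [hCset, Nat.card_Ico] at hC
      rw [chiZ] at hIH ⊢
      omega
    · -- base case: single row
      have hU'empty : U' = ∅ := Finset.not_nonempty_iff_eq_empty.mp hU'ne
      have hrow : ∀ c ∈ U, c.1 = i0 := by
        intro c hc
        by_contra h
        exact hU'ne ⟨c, (hmemU' c).mpr ⟨hc, h⟩⟩
      have hAset : J.filter (fun j => (i0 + 1, j) ∈ U) = ∅ := by
        apply Finset.eq_empty_of_forall_notMem
        intro j hj
        have := hrow _ (Finset.mem_filter.mp hj).2
        omega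
      have hCset : J.filter (fun j => (i0 + 1, j + 1) ∈ U) = ∅ := by
        apply Finset.eq_empty_of_forall_notMem
        intro j hj
        have := hrow _ (Finset.mem_filter.mp hj).2
        omega
      have hBset : J.filter (fun j => (i0, j + 1) ∈ U) = Finset.Ico a b := by
        ext j
        simp only [Finset.mem_filter, Finset.mem_Ico]
        rw [hJi, ← hmemJ, hJi]
        omega
      have hU'A : (U'.filter (fun c => (c.1 + 1, c.2) ∈ U')).card = 0 := by
        rw [hU'empty]; simp
      have hU'B : (U'.filter (fun c => (c.1, c.2 + 1) ∈ U')).card = 0 := by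
        rw [hU'empty]; simp
      have hU'C : (U'.filter (fun c => (c.1 + 1, c.2 + 1) ∈ U')).card = 0 := by
        rw [hU'empty]; simp
      have hU'0 : U'.card = 0 := by rw [hU'empty]; simp
      rw [hAset, Finset.card_empty, hU'A] at hA
      rw [hBset, Nat.card_Ico, hU'B] at hB
      rw [hCset, Finset.card_empty, hU'C] at hC
      rw [chiZ]
      omega

lemma weight_indicator {lam U : Finset (ℕ × ℕ)} (hup : IsUpper lam U) :
    weight lam (boxIndicator U) = chiZ U := by
  have S0 : ∑ b ∈ lam, ((boxIndicator U b : ℤ)) = (U.card : ℤ) := by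
    have h1 : ∀ b ∈ lam, (boxIndicator U b : ℤ) = if b ∈ U then 1 else 0 := by
      intro b _; rw [boxIndicator]; split_ifs <;> simp
    rw [Finset.sum_congr rfl h1, Finset.sum_boole]
    congr 1
    have : lam.filter (fun b => b ∈ U) = U := by
      ext b; simp only [Finset.mem_filter]
      exact ⟨fun h => h.2, fun h => ⟨hup.1 h, h⟩⟩
    rw [this]
  have S1 : ∑ b ∈ lam, (if b.1 = 0 then (0:ℤ) else (boxIndicator U (b.1 - 1, b.2) : ℤ))
      = ((U.filter (fun c => (c.1 + 1, c.2) ∈ lam)).card : ℤ) := by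
    have h1 : ∀ b ∈ lam, (if b.1 = 0 then (0:ℤ) else (boxIndicator U (b.1 - 1, b.2) : ℤ))
        = if (¬b.1 = 0 ∧ (b.1 - 1, b.2) ∈ U) then 1 else 0 := by
      intro b _; rw [boxIndicator]; split_ifs <;> simp_all
    rw [Finset.sum_congr rfl h1, Finset.sum_boole]
    congr 1
    apply Finset.card_bij (fun b _ => ((b.1 - 1 : ℕ), b.2))
    · intro b hb
      simp only [Finset.mem_filter] at hb ⊢
      obtain ⟨hbl, hb0, hbU⟩ := hb
      refine ⟨hbU, ?_⟩
      have : (b.1 - 1 + 1, b.2) = b := by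
        apply Prod.ext <;> simp <;> omega
      rwa [this]
    · intro b hb b' hb' hee
      simp only [Finset.mem_filter] at hb hb'
      have h1 := congrArg Prod.fst hee
      have h2 := congrArg Prod.snd hee
      simp only at h1 h2
      apply Prod.ext _ h2
      omega
    · intro c hc
      simp only [Finset.mem_filter] at hc
      refine ⟨(c.1 + 1, c.2), Finset.mem_filter.mpr ⟨hc.2, by simp, by simpa using hc.1⟩, ?_⟩
      apply Prod.ext <;> simp
  have S2 : ∑ b ∈ lam, (if b.2 = 0 then (0:ℤ) else (boxIndicator U (b.1, b.2 - 1) : ℤ))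
      = ((U.filter (fun c => (c.1, c.2 + 1) ∈ lam)).card : ℤ) := by
    have h1 : ∀ b ∈ lam, (if b.2 = 0 then (0:ℤ) else (boxIndicator U (b.1, b.2 - 1) : ℤ))
        = if (¬b.2 = 0 ∧ (b.1, b.2 - 1) ∈ U) then 1 else 0 := by
      intro b _; rw [boxIndicator]; split_ifs <;> simp_all
    rw [Finset.sum_congr rfl h1, Finset.sum_boole]
    congr 1
    apply Finset.card_bij (fun b _ => (b.1, (b.2 - 1 : ℕ)))
    · intro b hb
      simp only [Finset.mem_filter] at hb ⊢
      obtain ⟨hbl, hb0, hbU⟩ := hb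
      refine ⟨hbU, ?_⟩
      have : (b.1, b.2 - 1 + 1) = b := by
        apply Prod.ext <;> simp <;> omega
      rwa [this]
    · intro b hb b' hb' hee
      simp only [Finset.mem_filter] at hb hb'
      have h1 := congrArg Prod.fst hee
      have h2 := congrArg Prod.snd hee
      simp only at h1 h2
      apply Prod.ext h1
      omega
    · intro c hc
      simp only [Finset.mem_filter] at hc
      refine ⟨(c.1, c.2 + 1), Finset.mem_filter.mpr ⟨hc.2, by simp, by simpa using hc.1⟩, ?_⟩
      apply Prod.ext <;> simp
  have S3 : ∑ b ∈ lam, (if b.1 = 0 ∨ b.2 = 0 then (0:ℤ)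
        else (boxIndicator U (b.1 - 1, b.2 - 1) : ℤ))
      = ((U.filter (fun c => (c.1 + 1, c.2 + 1) ∈ lam)).card : ℤ) := by
    have h1 : ∀ b ∈ lam, (if b.1 = 0 ∨ b.2 = 0 then (0:ℤ)
          else (boxIndicator U (b.1 - 1, b.2 - 1) : ℤ))
        = if (¬(b.1 = 0 ∨ b.2 = 0) ∧ (b.1 - 1, b.2 - 1) ∈ U) then 1 else 0 := by
      intro b _; rw [boxIndicator]; split_ifs <;> simp_all
    rw [Finset.sum_congr rfl h1, Finset.sum_boole]
    congr 1
    apply Finset.card_bij (fun b _ => ((b.1 - 1 : ℕ), (b.2 - 1 : ℕ)))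
    · intro b hb
      simp only [Finset.mem_filter] at hb ⊢
      obtain ⟨hbl, hb0, hbU⟩ := hb
      refine ⟨hbU, ?_⟩
      have : (b.1 - 1 + 1, b.2 - 1 + 1) = b := by
        apply Prod.ext <;> simp <;> omega
      rwa [this]
    · intro b hb b' hb' hee
      simp only [Finset.mem_filter] at hb hb'
      have h1 := congrArg Prod.fst hee
      have h2 := congrArg Prod.snd hee
      simp only at h1 h2
      apply Prod.ext <;> omega
    · intro c hc
      simp only [Finset.mem_filter] at hc
      refine ⟨(c.1 + 1, c.2 + 1), Finset.mem_filter.mpr ⟨hc.2, by simp, by simpa using hc.1⟩, ?_⟩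
      apply Prod.ext <;> simp
  have hAf : U.filter (fun c => (c.1 + 1, c.2) ∈ lam) = U.filter (fun c => (c.1 + 1, c.2) ∈ U) := by
    ext c
    simp only [Finset.mem_filter]
    constructor
    · rintro ⟨hc, hl⟩
      exact ⟨hc, hup.2 _ hc _ hl (by simp [Prod.le_def])⟩
    · rintro ⟨hc, hu⟩
      exact ⟨hc, hup.1 hu⟩
  have hBf : U.filter (fun c => (c.1, c.2 + 1) ∈ lam) = U.filter (fun c => (c.1, c.2 + 1) ∈ U) := by
    ext c
    simp only [Finset.mem_filter]
    constructor
    · rintro ⟨hc, hl⟩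
      exact ⟨hc, hup.2 _ hc _ hl (by simp [Prod.le_def])⟩
    · rintro ⟨hc, hu⟩
      exact ⟨hc, hup.1 hu⟩
  have hCf : U.filter (fun c => (c.1 + 1, c.2 + 1) ∈ lam)
      = U.filter (fun c => (c.1 + 1, c.2 + 1) ∈ U) := by
    ext c
    simp only [Finset.mem_filter]
    constructor
    · rintro ⟨hc, hl⟩
      exact ⟨hc, hup.2 _ hc _ hl (by simp [Prod.le_def])⟩
    · rintro ⟨hc, hu⟩
      exact ⟨hc, hup.1 hu⟩
  rw [weight]
  simp only [delta]
  rw [Finset.sum_add_distrib, Finset.sum_sub_distrib, Finset.sum_sub_distrib]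
  rw [S0, S1, S2, S3, hAf, hBf, hCf, chiZ]

lemma weight_sum (lam : Finset (ℕ × ℕ)) (T : Finset (ℕ × ℕ) →₀ ℕ) (n : ℕ × ℕ → ℕ)
    (hn : ∀ b, n b = ∑ U ∈ T.support, T U * boxIndicator U b) :
    weight lam n = ∑ U ∈ T.support, (T U : ℤ) * weight lam (boxIndicator U) := by
  have key : ∀ b, delta n b = ∑ U ∈ T.support, (T U : ℤ) * delta (boxIndicator U) b := by
    intro b
    simp only [delta]
    have expand : ∑ U ∈ T.support, (T U : ℤ) *
          ((boxIndicator U b : ℤ)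
            - (if b.1 = 0 then 0 else (boxIndicator U (b.1 - 1, b.2) : ℤ))
            - (if b.2 = 0 then 0 else (boxIndicator U (b.1, b.2 - 1) : ℤ))
            + (if b.1 = 0 ∨ b.2 = 0 then 0 else (boxIndicator U (b.1 - 1, b.2 - 1) : ℤ)))
        = (∑ U ∈ T.support, (T U : ℤ) * (boxIndicator U b : ℤ))
          - (∑ U ∈ T.support, (T U : ℤ) *
              (if b.1 = 0 then 0 else (boxIndicator U (b.1 - 1, b.2) : ℤ)))
          - (∑ U ∈ T.support, (T U : ℤ) *
              (if b.2 = 0 then 0 else (boxIndicator U (b.1, b.2 - 1) : ℤ)))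
          + (∑ U ∈ T.support, (T U : ℤ) *
              (if b.1 = 0 ∨ b.2 = 0 then 0 else (boxIndicator U (b.1 - 1, b.2 - 1) : ℤ))) := by
      rw [← Finset.sum_sub_distrib, ← Finset.sum_sub_distrib, ← Finset.sum_add_distrib]
      exact Finset.sum_congr rfl (fun U _ => by ring)
    rw [expand]
    have c0 : ∀ p : ℕ × ℕ, (n p : ℤ) = ∑ U ∈ T.support, (T U : ℤ) * (boxIndicator U p : ℤ) := by
      intro p
      rw [hn p]
      push_cast
      rfl
    have c1 : (if b.1 = 0 then (0:ℤ) else (n (b.1 - 1, b.2) : ℤ))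
        = ∑ U ∈ T.support, (T U : ℤ) *
            (if b.1 = 0 then 0 else (boxIndicator U (b.1 - 1, b.2) : ℤ)) := by
      by_cases h : b.1 = 0
      · simp [h]
      · simp only [h, if_false]
        exact c0 _
    have c2 : (if b.2 = 0 then (0:ℤ) else (n (b.1, b.2 - 1) : ℤ))
        = ∑ U ∈ T.support, (T U : ℤ) *
            (if b.2 = 0 then 0 else (boxIndicator U (b.1, b.2 - 1) : ℤ)) := by
      by_cases h : b.2 = 0
      · simp [h]
      · simp only [h, if_false]
        exact c0 _
    have c3 : (if b.1 = 0 ∨ b.2 = 0 then (0:ℤ) else (n (b.1 - 1, b.2 - 1) : ℤ))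
        = ∑ U ∈ T.support, (T U : ℤ) *
            (if b.1 = 0 ∨ b.2 = 0 then 0 else (boxIndicator U (b.1 - 1, b.2 - 1) : ℤ)) := by
      by_cases h : b.1 = 0 ∨ b.2 = 0
      · simp [h]
      · simp only [h, if_false]
        exact c0 _
    rw [c0, c1, c2, c3]
  rw [weight]
  rw [Finset.sum_congr rfl (fun b _ => key b), Finset.sum_comm]
  exact Finset.sum_congr rfl (fun U _ => by rw [weight, Finset.mul_sum])

lemma connected_overlap {U : Finset (ℕ × ℕ)} (h : ConnectedIn U) : OverlapP U := by
  intro i j j' h1 h2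
  exact path_overlap (h _ h1 _ h2) i (by simp) (by simp)

lemma connected_contig {U : Finset (ℕ × ℕ)} (h : ConnectedIn U) : ContigP U := by
  intro i j i' j' k h1 h2 hik hki
  exact path_contig (h _ h1 _ h2) h1 k (by simpa using hik) (by simpa using hki)

/-- RPP^λ is half-factorial: every factorisation of `n` into Young indicators has
length equal to the weight ω(n); in particular any two factorisations of `n`
have the same length. -/
theorem stmt7 (lam : Finset (ℕ × ℕ)) (hlam : IsYoung lam)
    (n : ℕ × ℕ → ℕ) (hn : IsRPP lam n)
    (T : Finset (ℕ × ℕ) →₀ ℕ) (hT : IsFactorisation lam n T) :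
    ((∑ U ∈ T.support, (T U : ℤ)) = weight lam n) ∧
    ∀ T' : Finset (ℕ × ℕ) →₀ ℕ, IsFactorisation lam n T' →
      ∑ U ∈ T.support, T U = ∑ U ∈ T'.support, T' U := by
  have main : ∀ T0 : Finset (ℕ × ℕ) →₀ ℕ, IsFactorisation lam n T0 →
      (∑ U ∈ T0.support, (T0 U : ℤ)) = weight lam n := by
    intro T0 hT0
    rw [weight_sum lam T0 n hT0.2]
    apply Finset.sum_congr rfl
    intro U hU
    obtain ⟨hup, hne, hconn⟩ := hT0.1 U hU
    rw [weight_indicator hup,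
      chi_eq_one hlam U.card U le_rfl hup hne (connected_overlap hconn) (connected_contig hconn),
      mul_one]
  refine ⟨main T hT, ?_⟩
  intro T' hT'
  have e : (∑ U ∈ T.support, (T U : ℤ)) = ∑ U ∈ T'.support, (T' U : ℤ) := by
    rw [main T hT, main T' hT']
  exact_mod_cast e
end

section
/- For any reverse plane partition n of shape λ, the weight satisfies ω(n) = Σ_{(i,j)∈Soc(λ)} n(i,j) − Σ_{(i,j)∈Subsoc(λ)} n(i,j), where Soc(λ) = {(i,j)∈λ : (i+1,j)∉λ and (i,j+1)∉λ} and Subsoc(λ) = {(i,j)∈λ : (i+1,j)∈λ, (i,j+1)∈λ, (i+1,j+1)∉λ}. -/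
open scoped Classical

/-- The socle of a Young diagram: its maximal boxes. -/
def Soc (lam : Finset (ℕ × ℕ)) : Finset (ℕ × ℕ) :=
  lam.filter (fun b => (b.1 + 1, b.2) ∉ lam ∧ (b.1, b.2 + 1) ∉ lam)

/-- The subsocle of a Young diagram. -/
def Subsoc (lam : Finset (ℕ × ℕ)) : Finset (ℕ × ℕ) :=
  lam.filter (fun b => (b.1 + 1, b.2) ∈ lam ∧ (b.1, b.2 + 1) ∈ lam ∧
    (b.1 + 1, b.2 + 1) ∉ lam)

lemma shiftR (lam : Finset (ℕ × ℕ)) (hlam : IsYoung lam) (f : ℕ × ℕ → ℤ) :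
    ∑ b ∈ lam, (if b.1 = 0 then 0 else f (b.1 - 1, b.2)) =
    ∑ b ∈ lam.filter (fun b => (b.1 + 1, b.2) ∈ lam), f b := by
  rw [show (∑ b ∈ lam, (if b.1 = 0 then 0 else f (b.1 - 1, b.2))) =
      ∑ b ∈ lam.filter (fun b => ¬ b.1 = 0), f (b.1 - 1, b.2) by
    rw [Finset.sum_filter]; apply Finset.sum_congr rfl; intro b _
    by_cases h : b.1 = 0 <;> simp [h]]
  apply Finset.sum_nbij' (i := fun b => (b.1 - 1, b.2)) (j := fun b => (b.1 + 1, b.2))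
  · intro a ha
    simp only [Finset.mem_filter] at ha ⊢
    have h1 : a.1 - 1 + 1 = a.1 := by omega
    constructor
    · exact (hlam (a.1 - 1) a.2).1 (by rw [h1]; exact ha.1)
    · rw [h1]; exact ha.1
  · intro a ha
    simp only [Finset.mem_filter] at ha ⊢
    exact ⟨ha.2, by omega⟩
  · intro a ha
    simp only [Finset.mem_filter] at ha
    ext <;> simp <;> omega
  · intro a ha; ext <;> simp
  · intro a ha; rfl

lemma shiftU (lam : Finset (ℕ × ℕ)) (hlam : IsYoung lam) (f : ℕ × ℕ → ℤ) :
    ∑ b ∈ lam, (if b.2 = 0 then 0 else f (b.1, b.2 - 1)) =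
    ∑ b ∈ lam.filter (fun b => (b.1, b.2 + 1) ∈ lam), f b := by
  rw [show (∑ b ∈ lam, (if b.2 = 0 then 0 else f (b.1, b.2 - 1))) =
      ∑ b ∈ lam.filter (fun b => ¬ b.2 = 0), f (b.1, b.2 - 1) by
    rw [Finset.sum_filter]; apply Finset.sum_congr rfl; intro b _
    by_cases h : b.2 = 0 <;> simp [h]]
  apply Finset.sum_nbij' (i := fun b => (b.1, b.2 - 1)) (j := fun b => (b.1, b.2 + 1))
  · intro a ha
    simp only [Finset.mem_filter] at ha ⊢
    have h1 : a.2 - 1 + 1 = a.2 := by omega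
    constructor
    · exact (hlam a.1 (a.2 - 1)).2 (by rw [h1]; exact ha.1)
    · rw [h1]; exact ha.1
  · intro a ha
    simp only [Finset.mem_filter] at ha ⊢
    exact ⟨ha.2, by omega⟩
  · intro a ha
    simp only [Finset.mem_filter] at ha
    ext <;> simp <;> omega
  · intro a ha; ext <;> simp
  · intro a ha; rfl

lemma shiftD (lam : Finset (ℕ × ℕ)) (hlam : IsYoung lam) (f : ℕ × ℕ → ℤ) :
    ∑ b ∈ lam, (if b.1 = 0 ∨ b.2 = 0 then 0 else f (b.1 - 1, b.2 - 1)) =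
    ∑ b ∈ lam.filter (fun b => (b.1 + 1, b.2 + 1) ∈ lam), f b := by
  rw [show (∑ b ∈ lam, (if b.1 = 0 ∨ b.2 = 0 then 0 else f (b.1 - 1, b.2 - 1))) =
      ∑ b ∈ lam.filter (fun b => ¬ (b.1 = 0 ∨ b.2 = 0)), f (b.1 - 1, b.2 - 1) by
    rw [Finset.sum_filter]; apply Finset.sum_congr rfl; intro b _
    by_cases h : b.1 = 0 ∨ b.2 = 0 <;> simp [h]]
  apply Finset.sum_nbij' (i := fun b => (b.1 - 1, b.2 - 1))
    (j := fun b => (b.1 + 1, b.2 + 1))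
  · intro a ha
    simp only [Finset.mem_filter] at ha ⊢
    push_neg at ha
    have h1 : a.1 - 1 + 1 = a.1 := by omega
    have h2 : a.2 - 1 + 1 = a.2 := by omega
    have hrow : (a.1 - 1, a.2) ∈ lam := (hlam (a.1 - 1) a.2).1 (by rw [h1]; exact ha.1)
    constructor
    · exact (hlam (a.1 - 1) (a.2 - 1)).2 (by rw [h2]; exact hrow)
    · rw [h1, h2]; exact ha.1
  · intro a ha
    simp only [Finset.mem_filter] at ha ⊢
    exact ⟨ha.2, by omega⟩
  · intro a ha
    simp only [Finset.mem_filter] at ha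
    push_neg at ha
    ext <;> simp <;> omega
  · intro a ha; ext <;> simp
  · intro a ha; rfl

/-- The weight of an RPP equals the sum of its socle values minus the sum of its
subsocle values. -/
theorem stmt8 (lam : Finset (ℕ × ℕ)) (hlam : IsYoung lam)
    (n : ℕ × ℕ → ℕ) (hn : IsRPP lam n) :
    weight lam n = ∑ b ∈ Soc lam, (n b : ℤ) - ∑ b ∈ Subsoc lam, (n b : ℤ) := by

  have key : weight lam n =
      ∑ b ∈ lam, (((n b : ℤ))
        - (if (b.1 + 1, b.2) ∈ lam then (n b : ℤ) else 0)
        - (if (b.1, b.2 + 1) ∈ lam then (n b : ℤ) else 0)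
        + (if (b.1 + 1, b.2 + 1) ∈ lam then (n b : ℤ) else 0)) := by
    unfold weight delta
    rw [Finset.sum_add_distrib, Finset.sum_sub_distrib, Finset.sum_sub_distrib]
    rw [Finset.sum_add_distrib, Finset.sum_sub_distrib, Finset.sum_sub_distrib]
    congr 1; congr 1; congr 1
    · rw [shiftR lam hlam (fun b => (n b : ℤ)), Finset.sum_filter]
    · rw [shiftU lam hlam (fun b => (n b : ℤ)), Finset.sum_filter]
    · rw [shiftD lam hlam (fun b => (n b : ℤ)), Finset.sum_filter]
  rw [key, Soc, Subsoc, Finset.sum_filter, Finset.sum_filter, ← Finset.sum_sub_distrib]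
  apply Finset.sum_congr rfl
  intro b hb
  have hD1 : (b.1 + 1, b.2 + 1) ∈ lam → (b.1 + 1, b.2) ∈ lam :=
    fun h => (hlam (b.1 + 1) b.2).2 h
  have hD2 : (b.1 + 1, b.2 + 1) ∈ lam → (b.1, b.2 + 1) ∈ lam :=
    fun h => (hlam b.1 (b.2 + 1)).1 h
  by_cases hR : (b.1 + 1, b.2) ∈ lam <;> by_cases hU : (b.1, b.2 + 1) ∈ lam <;>
    by_cases hD : (b.1 + 1, b.2 + 1) ∈ lam <;>
    simp_all <;> ring
end

section
/- For any nonempty connected upper set U in a Young diagram λ, the number of socle boxes of λ contained in U exceeds the number of subsocle boxes of λ contained in U by exactly one: |U ∩ Soc(λ)| = 1 + |U ∩ Subsoc(λ)|. -/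
open scoped Classical

/-! ### Auxiliary lemmas -/

lemma young_down_fst {lam : Finset (ℕ × ℕ)} (h : IsYoung lam) (k i j : ℕ) :
    (i + k, j) ∈ lam → (i, j) ∈ lam := by
  induction k with
  | zero => intro hm; simpa using hm
  | succ n ih =>
      intro hm
      exact ih ((h (i + n) j).1 hm)

lemma young_down_snd {lam : Finset (ℕ × ℕ)} (h : IsYoung lam) (k i j : ℕ) :
    (i, j + k) ∈ lam → (i, j) ∈ lam := by
  induction k with
  | zero => intro hm; simpa using hm
  | succ n ih =>
      intro hm
      exact ih ((h i (j + n)).2 hm)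

lemma young_down_s9 {lam : Finset (ℕ × ℕ)} (h : IsYoung lam) {i j i' j' : ℕ}
    (hm : (i, j) ∈ lam) (hi : i' ≤ i) (hj : j' ≤ j) : (i', j') ∈ lam := by
  obtain ⟨k, rfl⟩ := Nat.le.dest hi
  obtain ⟨l, rfl⟩ := Nat.le.dest hj
  exact young_down_snd h l i' j' (young_down_fst h k i' (j' + l) hm)

/-- Socle boxes in the same row coincide. -/
lemma soc_row_unique {lam : Finset (ℕ × ℕ)} (h : IsYoung lam) {c c' : ℕ × ℕ}
    (hc : c ∈ Soc lam) (hc' : c' ∈ Soc lam) (hrow : c.1 = c'.1) : c = c' := by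
  simp only [Soc, Finset.mem_filter] at hc hc'
  have h2 : c.2 = c'.2 := by
    rcases Nat.lt_trichotomy c.2 c'.2 with hlt | heq | hlt
    · exact absurd (young_down_s9 h (hrow ▸ hc'.1) le_rfl hlt) hc.2.2
    · exact heq
    · exact absurd (young_down_s9 h (hrow ▸ hc.1) le_rfl hlt) hc'.2.2
  exact Prod.ext hrow h2

/-- Subsocle boxes in the same row coincide. -/
lemma subsoc_row_unique {lam : Finset (ℕ × ℕ)} (h : IsYoung lam) {c c' : ℕ × ℕ}
    (hc : c ∈ Subsoc lam) (hc' : c' ∈ Subsoc lam) (hrow : c.1 = c'.1) : c = c' := by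
  simp only [Subsoc, Finset.mem_filter] at hc hc'
  have h2 : c.2 = c'.2 := by
    rcases Nat.lt_trichotomy c.2 c'.2 with hlt | heq | hlt
    · exact absurd (young_down_s9 h (hrow ▸ hc'.2.1) le_rfl hlt) hc.2.2.2
    · exact heq
    · exact absurd (young_down_s9 h (hrow ▸ hc.2.1) le_rfl hlt) hc'.2.2.2
  exact Prod.ext hrow h2

/-- Above any box of a Young diagram there is a socle box. -/
lemma exists_soc_above {lam : Finset (ℕ × ℕ)} (hlam : IsYoung lam) {b : ℕ × ℕ}
    (hb : b ∈ lam) : ∃ c ∈ Soc lam, b ≤ c := by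
  obtain ⟨m, hm, hmax⟩ : ∃ m ∈ lam.filter (fun x => b ≤ x), ∀ x ∈ lam.filter (fun x => b ≤ x), ¬ m < x := by
    obtain ⟨m, hm⟩ := Finset.exists_maximal (s := lam.filter (fun x => b ≤ x)) ⟨b, by simp [hb]⟩
    exact ⟨m, hm.1, fun x hx hlt => hlt.not_ge (hm.2 hx hlt.le)⟩
  simp only [Finset.mem_filter] at hm
  refine ⟨m, ?_, hm.2⟩
  simp only [Soc, Finset.mem_filter]
  refine ⟨hm.1, ?_, ?_⟩
  · intro hmem
    refine hmax (m.1 + 1, m.2) (Finset.mem_filter.2 ⟨hmem, hm.2.trans ?_⟩) ?_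
    · exact Prod.mk_le_mk.2 ⟨Nat.le_succ _, le_rfl⟩
    · exact Prod.lt_iff.2 (Or.inl ⟨Nat.lt_succ_self _, le_rfl⟩)
  · intro hmem
    refine hmax (m.1, m.2 + 1) (Finset.mem_filter.2 ⟨hmem, hm.2.trans ?_⟩) ?_
    · exact Prod.mk_le_mk.2 ⟨le_rfl, Nat.le_succ _⟩
    · exact Prod.lt_iff.2 (Or.inr ⟨le_rfl, Nat.lt_succ_self _⟩)

/-- If `(i,j) ∈ lam` but `(i+1,j) ∉ lam`, then row `i` ends in a socle box at column `≥ j`. -/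
lemma exists_soc_row {lam : Finset (ℕ × ℕ)} (hlam : IsYoung lam) {i j : ℕ}
    (hij : (i, j) ∈ lam) (hup : (i + 1, j) ∉ lam) :
    ∃ k, j ≤ k ∧ (i, k) ∈ Soc lam := by
  obtain ⟨m, hm, hmax⟩ : ∃ m ∈ lam.filter (fun x => x.1 = i ∧ j ≤ x.2), ∀ x ∈ lam.filter (fun x => x.1 = i ∧ j ≤ x.2), ¬ m < x := by
    obtain ⟨m, hm⟩ := Finset.exists_maximal (s := lam.filter (fun x => x.1 = i ∧ j ≤ x.2)) ⟨(i, j), by simp [hij]⟩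
    exact ⟨m, hm.1, fun x hx hlt => hlt.not_ge (hm.2 hx hlt.le)⟩
  simp only [Finset.mem_filter] at hm
  refine ⟨m.2, hm.2.2, ?_⟩
  have hmeq : m = (i, m.2) := Prod.ext hm.2.1 rfl
  simp only [Soc, Finset.mem_filter]
  refine ⟨hmeq ▸ hm.1, ?_, ?_⟩
  · intro hmem
    exact hup (young_down_s9 hlam hmem le_rfl hm.2.2)
  · intro hmem
    refine hmax (i, m.2 + 1) (Finset.mem_filter.2 ⟨hmem, rfl, hm.2.2.trans (Nat.le_succ _)⟩) ?_
    rw [hmeq]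
    exact Prod.lt_iff.2 (Or.inr ⟨le_rfl, Nat.lt_succ_self _⟩)

/-- Crossing lemma along a path. -/
lemma crossing {α : Type*} {R : α → α → Prop} {P : α → Prop} :
    ∀ {a b : α}, Relation.ReflTransGen R a b → P a → ¬ P b →
      ∃ x y, R x y ∧ P x ∧ ¬ P y := by
  intro a b h
  induction h with
  | refl => intro h1 h2; exact absurd h1 h2
  | @tail b c _ hbc ih =>
      intro ha hc
      by_cases hb : P b
      · exact ⟨b, c, hbc, hb, hc⟩
      · exact ih ha hb

/-- Between two socle boxes of a connected upper set there is a subsocle box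
in the row of the higher one. -/
lemma subsoc_between {lam : Finset (ℕ × ℕ)} (hlam : IsYoung lam)
    {U : Finset (ℕ × ℕ)} (hU : IsUpper lam U) (hconn : ConnectedIn U)
    {c c' : ℕ × ℕ} (hc : c ∈ U ∩ Soc lam) (hc' : c' ∈ U ∩ Soc lam)
    (hlt : c.1 < c'.1) : ∃ d ∈ U ∩ Subsoc lam, d.1 = c.1 := by
  rw [Finset.mem_inter] at hc hc'
  have hcsoc := hc.2; have hc'soc := hc'.2
  simp only [Soc, Finset.mem_filter] at hcsoc hc'soc
  -- predicate: the box below in row c.1+1 belongs to lam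
  have hPc' : (c.1 + 1, c'.2) ∈ lam := young_down_s9 hlam hc'soc.1 hlt le_rfl
  have hPc : (c.1 + 1, c.2) ∉ lam := hcsoc.2.1
  obtain ⟨x, y, ⟨hxU, hyU, hxy⟩, hPx, hPy⟩ :=
    crossing (P := fun z : ℕ × ℕ => (c.1 + 1, z.2) ∈ lam)
      (hconn c' hc'.1 c hc.1) hPc' hPc
  rcases hxy with ⟨h1, h2⟩ | ⟨h1, _⟩
  · -- same row, columns differ by one
    rcases h2 with h2 | h2
    · -- x.2 = y.2 + 1 : impossible since P x, ¬ P y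
      exact absurd (young_down_s9 hlam hPx le_rfl (h2 ▸ Nat.le_succ _)) hPy
    · -- y.2 = x.2 + 1
      refine ⟨(c.1, x.2), ?_, rfl⟩
      have hxc2 : x.2 < c.2 := by
        by_contra hge
        exact hcsoc.2.1 (young_down_s9 hlam hPx le_rfl (Nat.le_of_not_lt hge))
      have hx1 : x.1 ≤ c.1 := by
        by_contra hgt
        exact hPy (young_down_s9 hlam (hU.1 hyU) (by omega) le_rfl)
      rw [Finset.mem_inter]
      constructor
      · refine hU.2 x hxU (c.1, x.2) (young_down_s9 hlam hcsoc.1 le_rfl (le_of_lt hxc2)) ?_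
        exact Prod.mk_le_mk.2 ⟨hx1, le_rfl⟩
      · simp only [Subsoc, Finset.mem_filter]
        exact ⟨young_down_s9 hlam hcsoc.1 le_rfl (le_of_lt hxc2), hPx,
          young_down_s9 hlam hcsoc.1 le_rfl hxc2, h2 ▸ hPy⟩
  · exact absurd (h1 ▸ hPx) hPy

/-- A nonempty connected upper set contains exactly one more socle box than
subsocle boxes. -/
theorem stmt9 (lam : Finset (ℕ × ℕ)) (hlam : IsYoung lam)
    (U : Finset (ℕ × ℕ)) (hU : IsUpper lam U) (hne : U.Nonempty)
    (hconn : ConnectedIn U) :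
    (U ∩ Soc lam).card = 1 + (U ∩ Subsoc lam).card := by
  classical
  obtain ⟨b, hb⟩ := hne
  obtain ⟨c0, hc0soc, hbc0⟩ := exists_soc_above hlam (hU.1 hb)
  have hc0U : c0 ∈ U := hU.2 b hb c0 (Finset.mem_filter.1 hc0soc).1 hbc0
  have hne' : (U ∩ Soc lam).Nonempty := ⟨c0, Finset.mem_inter.2 ⟨hc0U, hc0soc⟩⟩
  obtain ⟨cm, hcm, hcmax⟩ := Finset.exists_max_image (U ∩ Soc lam) Prod.fst hne'
  -- every subsocle box of U has a socle box of U (other than cm) in its row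
  have h_ex : ∀ d ∈ U ∩ Subsoc lam,
      ∃ c, c ∈ (U ∩ Soc lam).erase cm ∧ c.1 = d.1 := by
    intro d hd
    rw [Finset.mem_inter] at hd
    have hdsub := hd.2
    simp only [Subsoc, Finset.mem_filter] at hdsub
    obtain ⟨k, hk, hksoc⟩ := exists_soc_row hlam hdsub.2.2.1 hdsub.2.2.2
    have hcU : (d.1, k) ∈ U := by
      refine hU.2 d hd.1 (d.1, k) (Finset.mem_filter.1 hksoc).1 ?_
      exact Prod.mk_le_mk.2 ⟨le_rfl, le_trans (Nat.le_succ _) hk⟩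
    -- a socle box strictly below row d.1 lies in U, so cm is strictly below too
    obtain ⟨c', hc'soc, hc'ge⟩ := exists_soc_above hlam hdsub.2.1
    have hbelowU : (d.1 + 1, d.2) ∈ U :=
      hU.2 d hd.1 _ hdsub.2.1 (Prod.mk_le_mk.2 ⟨Nat.le_succ _, le_rfl⟩)
    have hc'U : c' ∈ U := hU.2 _ hbelowU c' (Finset.mem_filter.1 hc'soc).1 hc'ge
    have hlt : d.1 < cm.1 :=
      lt_of_lt_of_le (lt_of_lt_of_le (Nat.lt_succ_self _) hc'ge.1)
        (hcmax c' (Finset.mem_inter.2 ⟨hc'U, hc'soc⟩))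
    refine ⟨(d.1, k), Finset.mem_erase.2 ⟨?_, Finset.mem_inter.2 ⟨hcU, hksoc⟩⟩, rfl⟩
    intro heq
    have : (d.1, k).1 = cm.1 := by rw [heq]
    omega
  have key : (U ∩ Subsoc lam).card = ((U ∩ Soc lam).erase cm).card := by
    refine Finset.card_bij (fun d hd => Classical.choose (h_ex d hd)) ?_ ?_ ?_
    · intro d hd
      exact (Classical.choose_spec (h_ex d hd)).1
    · intro d₁ hd₁ d₂ hd₂ heq
      have h1 := (Classical.choose_spec (h_ex d₁ hd₁)).2
      have h2 := (Classical.choose_spec (h_ex d₂ hd₂)).2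
      have hrow : d₁.1 = d₂.1 := by rw [← h1, ← h2]; exact congrArg Prod.fst heq
      exact subsoc_row_unique hlam (Finset.mem_inter.1 hd₁).2
        (Finset.mem_inter.1 hd₂).2 hrow
    · intro c hc
      rw [Finset.mem_erase] at hc
      have hle : c.1 ≤ cm.1 := hcmax c hc.2
      have hne2 : c.1 ≠ cm.1 := fun h =>
        hc.1 (soc_row_unique hlam (Finset.mem_inter.1 hc.2).2
          (Finset.mem_inter.1 hcm).2 h)
      obtain ⟨d, hd, hdrow⟩ := subsoc_between hlam hU hconn hc.2 hcm (lt_of_le_of_ne hle hne2)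
      refine ⟨d, hd, ?_⟩
      have hspec := Classical.choose_spec (h_ex d hd)
      have : (Classical.choose (h_ex d hd)).1 = c.1 := by rw [hspec.2, hdrow]
      exact soc_row_unique hlam
        (Finset.mem_inter.1 (Finset.mem_erase.1 hspec.1).2).2
        (Finset.mem_inter.1 hc.2).2 this
  have herase : ((U ∩ Soc lam).erase cm).card + 1 = (U ∩ Soc lam).card :=
    Finset.card_erase_add_one hcm
  omega
end

section
/- If ν₁, ν₂, ν₃ are three pairwise distinct Young indicators of shape λ and m₁, m₂, m₃ are positive integers with m₁·ν₁ = m₂·ν₂ + m₃·ν₃ (as functions λ → ℕ), then a contradiction follows; i.e., no such relation exists among three distinct Young indicators with all coefficients positive. -/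
open scoped Classical

lemma adj_comparable_s14 {x y : ℕ × ℕ} (h : Adj x y) : x ≤ y ∨ y ≤ x := by
  rcases h with ⟨h1, h2 | h2⟩ | ⟨h1, h2 | h2⟩
  · right; exact ⟨le_of_eq h1.symm, by omega⟩
  · left; exact ⟨le_of_eq h1, by omega⟩
  · right; exact ⟨by omega, le_of_eq h1.symm⟩
  · left; exact ⟨by omega, le_of_eq h1⟩

/-- No relation m₁·ν₁ = m₂·ν₂ + m₃·ν₃ with positive coefficients exists among
three pairwise distinct Young indicators. -/
theorem stmt14 (lam : Finset (ℕ × ℕ)) (hlam : IsYoung lam)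
    (ν₁ ν₂ ν₃ : ℕ × ℕ → ℕ)
    (h1 : IsYoungIndicator lam ν₁) (h2 : IsYoungIndicator lam ν₂)
    (h3 : IsYoungIndicator lam ν₃)
    (h12 : ν₁ ≠ ν₂) (h13 : ν₁ ≠ ν₃) (h23 : ν₂ ≠ ν₃)
    (m₁ m₂ m₃ : ℕ) (hm1 : 0 < m₁) (hm2 : 0 < m₂) (hm3 : 0 < m₃)
    (hrel : ∀ b, m₁ * ν₁ b = m₂ * ν₂ b + m₃ * ν₃ b) :
    False := by
  obtain ⟨U₁, hU₁u, hU₁ne, hU₁c, rfl⟩ := h1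
  obtain ⟨U₂, hU₂u, hU₂ne, hU₂c, rfl⟩ := h2
  obtain ⟨U₃, hU₃u, hU₃ne, hU₃c, rfl⟩ := h3
  have hval : ∀ b, m₁ * (if b ∈ U₁ then 1 else 0) =
      m₂ * (if b ∈ U₂ then 1 else 0) + m₃ * (if b ∈ U₃ then 1 else 0) :=
    fun b => hrel b
  have h23' : U₂ ≠ U₃ := fun h => h23 (by rw [h])
  by_cases hI : ∃ b, b ∈ U₂ ∧ b ∈ U₃
  · obtain ⟨b, hb2, hb3⟩ := hI
    have hb := hval b
    have hne : ¬ ∀ c, c ∈ U₂ ↔ c ∈ U₃ := fun h => h23' (Finset.ext h)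
    push_neg at hne
    obtain ⟨c, hc⟩ := hne
    have hc' := hval c
    by_cases hc2 : c ∈ U₂ <;> by_cases hc3 : c ∈ U₃ <;>
      simp [hb2, hb3, hc2, hc3] at hb hc' hc <;> split_ifs at hb hc' <;> omega
  · push_neg at hI
    obtain ⟨a, ha2⟩ := hU₂ne
    obtain ⟨b, hb3⟩ := hU₃ne
    have mem1 : ∀ c, c ∈ U₂ ∨ c ∈ U₃ → c ∈ U₁ := by
      intro c hc
      have := hval c
      by_contra h
      rcases hc with hc | hc <;> simp [h, hc] at this <;> split_ifs at this <;> omega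
    have step : ∀ x y : ℕ × ℕ, x ∈ U₂ → x ∈ U₁ ∧ y ∈ U₁ ∧ Adj x y → y ∈ U₂ := by
      intro x y hx2 ⟨hx1, hy1, hadj⟩
      have hy23 : y ∈ U₂ ∨ y ∈ U₃ := by
        have := hval y
        by_contra h
        push_neg at h
        simp [h.1, h.2, hy1] at this
        omega
      rcases hy23 with hy | hy
      · exact hy
      · exfalso
        rcases adj_comparable_s14 hadj with hle | hle
        · exact hI y (hU₂u.2 x hx2 y (hU₁u.1 hy1) hle) hy
        · exact hI x hx2 (hU₃u.2 y hy x (hU₁u.1 hx1) hle)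
    have path := hU₁c a (mem1 a (Or.inl ha2)) b (mem1 b (Or.inr hb3))
    have hb2 : b ∈ U₂ := by
      clear hb3
      induction path with
      | refl => exact ha2
      | tail _ h ih => exact step _ _ ih h
    exact hI b hb2 hb3
end
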